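/- arXiv:2302.12350 — 6 statements merged into one kernel-verified Lean document; each statement's English description precedes it below -/
import Mathlib

section
/- For every h ∈ L¹(a,b) the boundary value problem −(φ(v'))' = h in (a,b), v(a) = v(b) = 0, has exactly one solution: there exists a unique v ∈ C¹([a,b]) with v(a) = v(b) = 0 such that φ(v'(x)) = φ(v'(a)) − ∫_a^x h(s) ds for all x ∈ [a,b]. -/
open MeasureTheory Set Filter

/-- `φ` is an odd increasing homeomorphism of `ℝ`. -/
def OddIncHomeo (φ : ℝ → ℝ) : Prop :=
  StrictMono φ ∧ Continuous φ ∧ Function.Surjective φ ∧ ∀ x, φ (-x) = -φ x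

/-- `v` is `C¹` on `[a,b]` with derivative `v'`. -/
def C1On (v v' : ℝ → ℝ) (a b : ℝ) : Prop :=
  ContinuousOn v (Icc a b) ∧ ContinuousOn v' (Icc a b) ∧
  ∀ x ∈ Icc a b, HasDerivWithinAt v (v' x) (Icc a b) x

/-- `v` (with derivative `v'`) is a solution of `-(φ(v'))' = h` in `(a,b)`,
`v(a) = v(b) = 0`. -/
def IsSolutionH (φ h : ℝ → ℝ) (a b : ℝ) (v v' : ℝ → ℝ) : Prop :=
  C1On v v' a b ∧ v a = 0 ∧ v b = 0 ∧
  ∀ x ∈ Icc a b, φ (v' x) = φ (v' a) - ∫ s in a..x, h s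

theorem exists_unique_solution
    (a b : ℝ) (hab : a < b) (φ : ℝ → ℝ) (hφ : OddIncHomeo φ)
    (h : ℝ → ℝ) (hh : IntegrableOn h (Icc a b)) :
    (∃ v v' : ℝ → ℝ, IsSolutionH φ h a b v v') ∧
    (∀ v₁ v₁' v₂ v₂' : ℝ → ℝ, IsSolutionH φ h a b v₁ v₁' →
      IsSolutionH φ h a b v₂ v₂' → ∀ x ∈ Icc a b, v₁ x = v₂ x) := by
  obtain ⟨hmono, hcont, hsurj, hodd⟩ := hφ
  have hφ0 : φ 0 = 0 := by
    have := hodd 0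
    simp only [neg_zero] at this
    linarith
  -- the inverse of φ
  set e := StrictMono.orderIsoOfSurjective φ hmono hsurj with he
  set ψ : ℝ → ℝ := fun y => e.symm y with hψdef
  have he_apply : ∀ x, e x = φ x := fun x => rfl
  have hψφ : ∀ x, ψ (φ x) = x := fun x => e.symm_apply_apply x
  have hφψ : ∀ y, φ (ψ y) = y := fun y => e.apply_symm_apply y
  have hψmono : StrictMono ψ := e.symm.strictMono
  have hψcont : Continuous ψ := e.symm.continuous
  have hψ0 : ψ 0 = 0 := by nth_rewrite 1 [← hφ0]; exact hψφ 0
  -- replace h by its truncation to [a,b]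
  set h₀ : ℝ → ℝ := (Icc a b).indicator h with hh₀def
  have hh₀ : Integrable h₀ := by
    rw [hh₀def, integrable_indicator_iff measurableSet_Icc]
    exact hh
  set H : ℝ → ℝ := fun x => ∫ s in a..x, h₀ s with hHdef
  have hHcont : Continuous H := hh₀.continuous_primitive a
  have hHa : H a = 0 := intervalIntegral.integral_same
  have hHagree : ∀ x ∈ Icc a b, (∫ s in a..x, h s) = H x := by
    intro x hx
    apply intervalIntegral.integral_congr
    intro s hs
    have hsub : uIcc a x ⊆ Icc a b := by
      rw [uIcc_of_le hx.1]
      exact Icc_subset_Icc le_rfl hx.2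
    exact (indicator_of_mem (hsub hs) h).symm
  -- the family of candidate derivatives
  set g : ℝ → ℝ → ℝ := fun c s => ψ (c - H s) with hgdef
  have hgcont : Continuous (Function.uncurry g) := by
    apply hψcont.comp
    exact continuous_fst.sub (hHcont.comp continuous_snd)
  have hgc : ∀ c, Continuous (g c) := fun c =>
    hψcont.comp (continuous_const.sub hHcont)
  set G : ℝ → ℝ := fun c => ∫ s in a..b, g c s with hGdef
  have hGcont : Continuous G :=
    intervalIntegral.continuous_parametric_intervalIntegral_of_continuous' hgcont a b
  have hGmono : StrictMono G := by
    intro c₁ c₂ hc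
    have hpos : (0 : ℝ) < ∫ s in a..b, (g c₂ s - g c₁ s) := by
      apply intervalIntegral.intervalIntegral_pos_of_pos_on
      · exact ((hgc c₂).sub (hgc c₁)).intervalIntegrable a b
      · intro x _
        have : g c₁ x < g c₂ x := hψmono (by linarith)
        linarith
      · exact hab
    rw [intervalIntegral.integral_sub ((hgc c₂).intervalIntegrable a b)
      ((hgc c₁).intervalIntegrable a b)] at hpos
    simp only [hGdef]
    linarith
  -- find bounds for H
  obtain ⟨M, hM⟩ := isCompact_Icc.exists_bound_of_continuousOn
    (hHcont.continuousOn : ContinuousOn H (Icc a b))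
  have hM0 : 0 ≤ M := le_trans (norm_nonneg _) (hM a ⟨le_rfl, hab.le⟩)
  have hGM : 0 ≤ G M := by
    apply intervalIntegral.integral_nonneg hab.le
    intro u hu
    rw [← hψ0]
    apply hψmono.le_iff_le.2
    have := hM u hu
    rw [Real.norm_eq_abs] at this
    have := abs_le.1 this
    linarith
  have hGmM : G (-M) ≤ 0 := by
    have : (0:ℝ) ≤ ∫ s in a..b, -g (-M) s := by
      apply intervalIntegral.integral_nonneg hab.le
      intro u hu
      have hle : g (-M) u ≤ 0 := by
        rw [← hψ0]
        apply hψmono.le_iff_le.2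
        have := hM u hu
        rw [Real.norm_eq_abs] at this
        have := abs_le.1 this
        linarith
      linarith
    rw [intervalIntegral.integral_neg] at this
    simp only [hGdef]
    linarith
  -- find the root c₀ of G
  have hzero : (0:ℝ) ∈ Icc (G (-M)) (G M) := ⟨hGmM, hGM⟩
  obtain ⟨c₀, _, hGc₀⟩ := intermediate_value_Icc (by linarith : -M ≤ M)
    hGcont.continuousOn hzero
  -- general facts about any solution
  have key : ∀ v v' : ℝ → ℝ, IsSolutionH φ h a b v v' →
      (G (φ (v' a)) = 0) ∧ (∀ x ∈ Icc a b, v' x = g (φ (v' a)) x) ∧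
      (∀ x ∈ Icc a b, v x = ∫ t in a..x, g (φ (v' a)) t) := by
    intro v v' ⟨⟨hvcont, hv'cont, hvderiv⟩, hva, hvb, heq⟩
    set c := φ (v' a) with hcdef
    have hd : ∀ x ∈ Icc a b, v' x = g c x := by
      intro x hx
      have h1 : φ (v' x) = c - H x := by
        rw [heq x hx, hHagree x hx]
      have := congrArg ψ h1
      rwa [hψφ] at this
    have hftc : ∀ x ∈ Icc a b, v x = ∫ t in a..x, v' t := by
      intro x hx
      have hIccsub : Icc a x ⊆ Icc a b := Icc_subset_Icc le_rfl hx.2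
      have := intervalIntegral.integral_eq_sub_of_hasDeriv_right_of_le hx.1
        (hvcont.mono hIccsub)
        (fun y hy => by
          have hy' : y ∈ Icc a b := ⟨hy.1.le, hy.2.le.trans hx.2⟩
          have hyo : y ∈ Ioo a b := ⟨hy.1, lt_of_lt_of_le hy.2 hx.2⟩
          exact (hvderiv y hy').mono_of_mem_nhdsWithin
            (nhdsWithin_le_nhds (Icc_mem_nhds hyo.1 hyo.2))
        )
        (by
          apply ContinuousOn.intervalIntegrable
          rw [uIcc_of_le hx.1]
          exact hv'cont.mono hIccsub)
      rw [this, hva, sub_zero]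
    constructor
    · have : G c = ∫ t in a..b, v' t := by
        apply intervalIntegral.integral_congr
        intro s hs
        rw [uIcc_of_le hab.le] at hs
        exact (hd s hs).symm
      rw [this, ← hftc b ⟨hab.le, le_rfl⟩, hvb]
    refine ⟨hd, fun x hx => ?_⟩
    rw [hftc x hx]
    apply intervalIntegral.integral_congr
    intro s hs
    rw [uIcc_of_le hx.1] at hs
    exact hd s (Icc_subset_Icc le_rfl hx.2 hs)
  constructor
  · -- existence
    refine ⟨fun x => ∫ t in a..x, g c₀ t, g c₀, ?_⟩
    have hprim : ∀ x : ℝ, HasDerivAt (fun u => ∫ t in a..u, g c₀ t) (g c₀ x) x :=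
      fun x => ((hgc c₀).integral_hasStrictDerivAt a x).hasDerivAt
    refine ⟨⟨?_, (hgc c₀).continuousOn, fun x _ => (hprim x).hasDerivWithinAt⟩, ?_, ?_, ?_⟩
    · exact (intervalIntegral.continuous_primitive
        (fun a b => (hgc c₀).intervalIntegrable a b) a).continuousOn
    · exact intervalIntegral.integral_same
    · exact hGc₀
    · intro x hx
      have hga : g c₀ a = ψ c₀ := by simp [hgdef, hHa]
      rw [hHagree x hx]
      simp only [hgdef, hga, hφψ]
      rw [hHa]
      ring
  · -- uniqueness
    intro v₁ v₁' v₂ v₂' hs₁ hs₂ x hx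
    obtain ⟨hG₁, _, hrep₁⟩ := key v₁ v₁' hs₁
    obtain ⟨hG₂, _, hrep₂⟩ := key v₂ v₂' hs₂
    have hc : φ (v₁' a) = φ (v₂' a) := by
      by_contra hne
      rcases lt_or_gt_of_ne hne with hlt | hlt
      · have := hGmono hlt; rw [hG₁, hG₂] at this; exact lt_irrefl _ this
      · have := hGmono hlt; rw [hG₁, hG₂] at this; exact lt_irrefl _ this
    rw [hrep₁ x hx, hrep₂ x hx, hc]
end

section
/- Let h₁, h₂ ∈ L¹(a,b) with h₁ ≤ h₂ a.e. in (a,b), and let v₁, v₂ ∈ C¹([a,b]) be solutions of −(φ(vᵢ'))' = hᵢ in (a,b), vᵢ(a) = vᵢ(b) = 0 (i = 1,2). Then v₁ ≤ v₂ on [a,b] (i.e. the solution operator S_φ is nondecreasing). -/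
open MeasureTheory Set Filter Topology

theorem solution_operator_monotone
    (a b : ℝ) (hab : a < b) (φ : ℝ → ℝ) (hφ : OddIncHomeo φ)
    (h₁ h₂ : ℝ → ℝ) (hh₁ : IntegrableOn h₁ (Icc a b)) (hh₂ : IntegrableOn h₂ (Icc a b))
    (hle : ∀ᵐ x ∂(volume : Measure ℝ), x ∈ Ioo a b → h₁ x ≤ h₂ x)
    (v₁ v₁' v₂ v₂' : ℝ → ℝ)
    (hv₁ : IsSolutionH φ h₁ a b v₁ v₁') (hv₂ : IsSolutionH φ h₂ a b v₂ v₂') :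
    ∀ x ∈ Icc a b, v₁ x ≤ v₂ x := by
  obtain ⟨hφmono, hφcont, hφsurj, hφodd⟩ := hφ
  obtain ⟨⟨hv₁c, hv₁'c, hv₁d⟩, hv₁a, hv₁b, hv₁eq⟩ := hv₁
  obtain ⟨⟨hv₂c, hv₂'c, hv₂d⟩, hv₂a, hv₂b, hv₂eq⟩ := hv₂
  by_contra hcon
  push_neg at hcon
  obtain ⟨x₀, hx₀, hx₀'⟩ := hcon
  set w : ℝ → ℝ := fun x => v₁ x - v₂ x with hw
  have hwc : ContinuousOn w (Icc a b) := hv₁c.sub hv₂c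
  obtain ⟨c, hc, hmax⟩ := (isCompact_Icc (a := a) (b := b)).exists_isMaxOn ⟨x₀, hx₀⟩ hwc
  have hwb : w b = 0 := by simp [hw, hv₁b, hv₂b]
  have hwa : w a = 0 := by simp [hw, hv₁a, hv₂a]
  have hwcpos : 0 < w c := lt_of_lt_of_le (by simp only [hw]; linarith) (hmax hx₀)
  have hca : c ≠ a := fun h => by simp [h, hwa] at hwcpos
  have hcb : c ≠ b := fun h => by simp [h, hwb] at hwcpos
  have hcIoo : c ∈ Ioo a b := ⟨lt_of_le_of_ne hc.1 (Ne.symm hca), lt_of_le_of_ne hc.2 hcb⟩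
  have hIccNhds : Icc a b ∈ 𝓝 c := Icc_mem_nhds hcIoo.1 hcIoo.2
  -- derivative of w at c is zero
  have hd1 : HasDerivAt v₁ (v₁' c) c := (hv₁d c hc).hasDerivAt hIccNhds
  have hd2 : HasDerivAt v₂ (v₂' c) c := (hv₂d c hc).hasDerivAt hIccNhds
  have hdw : HasDerivAt w (v₁' c - v₂' c) c := hd1.sub hd2
  have hderiv0 : v₁' c - v₂' c = 0 := (hmax.isLocalMax hIccNhds).hasDerivAt_eq_zero hdw
  have hφceq : φ (v₁' c) = φ (v₂' c) := by
    have : v₁' c = v₂' c := by linarith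
    rw [this]
  -- key: v₂' x ≤ v₁' x for x ∈ Icc c b
  have hkey : ∀ x ∈ Icc c b, v₂' x ≤ v₁' x := by
    intro x hx
    have hxab : x ∈ Icc a b := ⟨le_trans hc.1 hx.1, hx.2⟩
    have hsub : Icc c x ⊆ Icc a b := Icc_subset_Icc hcIoo.1.le hxab.2
    have hint : ∀ (h : ℝ → ℝ), IntegrableOn h (Icc a b) →
        (∫ s in a..x, h s) = (∫ s in a..c, h s) + ∫ s in c..x, h s := by
      intro h hh
      refine (intervalIntegral.integral_add_adjacent_intervals ?_ ?_).symm
      · exact (hh.mono_set (by rw [uIcc_of_le hc.1]; exact Icc_subset_Icc_right hc.2)).intervalIntegrable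
      · exact (hh.mono_set (by rw [uIcc_of_le hx.1]; exact hsub)).intervalIntegrable
    have hmono : (∫ s in c..x, h₁ s) ≤ ∫ s in c..x, h₂ s := by
      have hii1 : IntervalIntegrable h₁ volume c x :=
        (hh₁.mono_set (by rw [uIcc_of_le hx.1]; exact hsub)).intervalIntegrable
      have hii2 : IntervalIntegrable h₂ volume c x :=
        (hh₂.mono_set (by rw [uIcc_of_le hx.1]; exact hsub)).intervalIntegrable
      have hae : h₁ ≤ᵐ[volume.restrict (Icc c x)] h₂ := by
        have hb_ne : ∀ᵐ t : ℝ ∂(volume : Measure ℝ), t ≠ b := by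
          simpa [ae_iff] using (measure_singleton b : (volume : Measure ℝ) {b} = 0)
        rw [Filter.EventuallyLE, ae_restrict_iff' measurableSet_Icc]
        filter_upwards [hle, hb_ne] with t ht htb htm
        exact ht ⟨lt_of_lt_of_le hcIoo.1 htm.1, lt_of_le_of_ne (le_trans htm.2 hxab.2) htb⟩
      exact intervalIntegral.integral_mono_ae_restrict hx.1 hii1 hii2 hae
    have e₁ := hv₁eq x hxab
    have e₂ := hv₂eq x hxab
    have e₁c := hv₁eq c hc
    have e₂c := hv₂eq c hc
    rw [hint h₁ hh₁] at e₁
    rw [hint h₂ hh₂] at e₂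
    have : φ (v₂' x) ≤ φ (v₁' x) := by
      have : φ (v₁' x) - φ (v₂' x)
          = (φ (v₁' c) - φ (v₂' c)) + ((∫ s in c..x, h₂ s) - ∫ s in c..x, h₁ s) := by
        rw [e₁, e₂, e₁c, e₂c]; ring
      linarith [this, hmono, hφceq.le, hφceq.ge]
    exact (hφmono.le_iff_le).1 this
  -- w is monotone on [c, b]
  have hcb' : c < b := hcIoo.2
  have hmonow : MonotoneOn w (Icc c b) := by
    have hconv : Convex ℝ (Icc c b) := convex_Icc c b
    have hcont : ContinuousOn w (Icc c b) := hwc.mono (Icc_subset_Icc_left hc.1)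
    have hderiv : ∀ x ∈ interior (Icc c b), 0 ≤ deriv w x := by
      intro x hx
      rw [interior_Icc] at hx
      have hxIoo : x ∈ Ioo a b := ⟨lt_trans hcIoo.1 hx.1, hx.2⟩
      have hN : Icc a b ∈ 𝓝 x := Icc_mem_nhds hxIoo.1 hxIoo.2
      have hdx : HasDerivAt w (v₁' x - v₂' x) x :=
        ((hv₁d x (Ioo_subset_Icc_self hxIoo)).hasDerivAt hN).sub
          ((hv₂d x (Ioo_subset_Icc_self hxIoo)).hasDerivAt hN)
      rw [hdx.deriv]
      have := hkey x ⟨hx.1.le, hx.2.le⟩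
      linarith
    have hdiff : DifferentiableOn ℝ w (interior (Icc c b)) := by
      intro x hx
      rw [interior_Icc] at hx
      have hxIoo : x ∈ Ioo a b := ⟨lt_trans hcIoo.1 hx.1, hx.2⟩
      have hN : Icc a b ∈ 𝓝 x := Icc_mem_nhds hxIoo.1 hxIoo.2
      exact (((hv₁d x (Ioo_subset_Icc_self hxIoo)).hasDerivAt hN).sub
        ((hv₂d x (Ioo_subset_Icc_self hxIoo)).hasDerivAt hN)).differentiableAt.differentiableWithinAt
    exact monotoneOn_of_deriv_nonneg hconv hcont hdiff hderiv
  have : w c ≤ w b := hmonow ⟨le_refl c, hcb'.le⟩ ⟨hcb'.le, le_refl b⟩ hcb'.le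
  rw [hwb] at this
  linarith
end

section
/- Let 0 ≤ h ∈ L¹(a,b) with h ≢ 0 and let v ∈ C¹([a,b]) be the solution of −(φ(v'))' = h in (a,b), v(a) = v(b) = 0. Then for all x ∈ [a,b]: θ̲_h · min{ ∫_a^{θ̄_h} φ⁻¹(∫_y^{θ̄_h} h(s) ds) dy , ∫_{θ̄_h}^b φ⁻¹(∫_{θ̄_h}^y h(s) ds) dy } · δ_Ω(x) ≤ v(x) ≤ φ⁻¹(∫_a^b h(s) ds) · δ_Ω(x). -/
/-!
Since `h ≥ 0`, `φ ∘ v'` is nonincreasing, hence so is `v'`, and `v` is concave with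
`v a = v b = 0`. By the mean value theorem `v` lies below its tangents at `a` and `b`, whose
slopes satisfy `v' a ≥ 0 ≥ v' b` and `φ (v' a) - φ (v' b) = ∫_a^b h`; this gives the upper bound.
It also lies above the chords through `(θ̄, v θ̄)` and the endpoints. Since `h` vanishes a.e. on
`(a, α)` and on `(β, b)` but not on `(a, b)`, we have `a ≤ α < β ≤ b`, whence `θ̲ (θ̄ - a) ≤ 1`
and `θ̲ (b - θ̄) ≤ 1`. Finally, `v θ̄` is at least the first integral if `v' θ̄ ≥ 0` (integrate
`v' y ≥ φ⁻¹ (∫_y^θ̄ h)` over `[a, θ̄]`) and at least the second if `v' θ̄ ≤ 0` (integrate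
`-v' y ≥ φ⁻¹ (∫_θ̄^y h)` over `[θ̄, b]`).
-/

open MeasureTheory Set Filter

/-- `α_h = sup 𝒜_h` where `𝒜_h = {x ∈ (a,b) : h = 0 a.e. on (a,x)}`, with
`α_h = a` if `𝒜_h = ∅`. -/
noncomputable def alphaH (h : ℝ → ℝ) (a b : ℝ) : ℝ :=
  sSup ({x | x ∈ Ioo a b ∧ ∀ᵐ y ∂(volume : Measure ℝ), y ∈ Ioo a x → h y = 0} ∪ {a})

/-- `β_h = inf ℬ_h` where `ℬ_h = {x ∈ (a,b) : h = 0 a.e. on (x,b)}`, with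
`β_h = b` if `ℬ_h = ∅`. -/
noncomputable def betaH (h : ℝ → ℝ) (a b : ℝ) : ℝ :=
  sInf ({x | x ∈ Ioo a b ∧ ∀ᵐ y ∂(volume : Measure ℝ), y ∈ Ioo x b → h y = 0} ∪ {b})

/-- `θ̲_h = min {1/(β_h - a), 1/(b - α_h)}`. -/
noncomputable def thetaLow (h : ℝ → ℝ) (a b : ℝ) : ℝ :=
  min (1 / (betaH h a b - a)) (1 / (b - alphaH h a b))

/-- `θ̄_h = (α_h + β_h)/2`. -/
noncomputable def thetaBar (h : ℝ → ℝ) (a b : ℝ) : ℝ :=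
  (alphaH h a b + betaH h a b) / 2

/-- `δ_Ω(x) = min (x - a, b - x)`. -/
noncomputable def deltaOmega (a b x : ℝ) : ℝ := min (x - a) (b - x)

namespace OddIncHomeo

variable {φ : ℝ → ℝ}

noncomputable def orderIso (hφ : OddIncHomeo φ) : ℝ ≃o ℝ :=
  StrictMono.orderIsoOfSurjective φ hφ.1 hφ.2.2.1

lemma invFun_eq_orderIso_symm (hφ : OddIncHomeo φ) : Function.invFun φ = hφ.orderIso.symm :=
  funext fun t => hφ.1.injective <| (Function.invFun_eq (hφ.2.2.1 t)).trans
    (StrictMono.orderIsoOfSurjective_self_symm_apply φ hφ.1 hφ.2.2.1 t).symm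

lemma invFun_le_iff (hφ : OddIncHomeo φ) {t x : ℝ} : Function.invFun φ t ≤ x ↔ t ≤ φ x := by
  rw [hφ.invFun_eq_orderIso_symm, OrderIso.symm_apply_le]
  rfl

lemma le_invFun_iff (hφ : OddIncHomeo φ) {t x : ℝ} : x ≤ Function.invFun φ t ↔ φ x ≤ t := by
  rw [hφ.invFun_eq_orderIso_symm, OrderIso.le_symm_apply]
  rfl

lemma continuous_invFun (hφ : OddIncHomeo φ) : Continuous (Function.invFun φ) := by
  rw [hφ.invFun_eq_orderIso_symm]
  exact hφ.orderIso.symm.continuous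

lemma map_zero (hφ : OddIncHomeo φ) : φ 0 = 0 := by
  have h := hφ.2.2.2 0
  rw [neg_zero] at h
  linarith

end OddIncHomeo

section SupportHull

lemma ae_imp_of_lt_csSup {α : Type*} [ConditionallyCompleteLinearOrder α] [TopologicalSpace α]
    [OrderTopology α] [FirstCountableTopology α] [MeasurableSpace α] {μ : Measure α}
    {S : Set α} {p : α → Prop} (hne : S.Nonempty) (hbdd : BddAbove S)
    (hS : ∀ x ∈ S, ∀ᵐ y ∂μ, y < x → p y) : ∀ᵐ y ∂μ, y < sSup S → p y := by
  obtain ⟨u, -, hu, huS⟩ := exists_seq_tendsto_sSup hne hbdd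
  filter_upwards [ae_all_iff.2 fun n => hS _ (huS n)] with y hy hyS
  obtain ⟨n, hn⟩ := (hu.eventually (lt_mem_nhds hyS)).exists
  exact hy n hn

lemma ae_imp_of_csInf_lt {α : Type*} [ConditionallyCompleteLinearOrder α] [TopologicalSpace α]
    [OrderTopology α] [FirstCountableTopology α] [MeasurableSpace α] {μ : Measure α}
    {S : Set α} {p : α → Prop} (hne : S.Nonempty) (hbdd : BddBelow S)
    (hS : ∀ x ∈ S, ∀ᵐ y ∂μ, x < y → p y) : ∀ᵐ y ∂μ, sInf S < y → p y :=
  ae_imp_of_lt_csSup (α := αᵒᵈ) (μ := μ) hne hbdd hS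

variable {h : ℝ → ℝ} {a b : ℝ}

lemma ae_eq_zero_of_mem_Ioo_alphaH : ∀ᵐ y, y ∈ Ioo a (alphaH h a b) → h y = 0 := by
  have key : ∀ᵐ y, y < alphaH h a b → a < y → h y = 0 := by
    unfold alphaH
    refine ae_imp_of_lt_csSup ⟨a, Or.inr rfl⟩
      ((bddAbove_Ioo.mono fun _ hx => hx.1).union bddAbove_singleton) ?_
    rintro x (⟨-, hx⟩ | rfl)
    · filter_upwards [hx] with y hy hyx hay using hy ⟨hay, hyx⟩
    · exact ae_of_all _ fun y hya hay => absurd hya (lt_asymm hay)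
  filter_upwards [key] with y hy hya using hy hya.2 hya.1

lemma ae_eq_zero_of_mem_Ioo_betaH : ∀ᵐ y, y ∈ Ioo (betaH h a b) b → h y = 0 := by
  have key : ∀ᵐ y, betaH h a b < y → y < b → h y = 0 := by
    unfold betaH
    refine ae_imp_of_csInf_lt ⟨b, Or.inr rfl⟩
      ((bddBelow_Ioo.mono fun _ hx => hx.1).union bddBelow_singleton) ?_
    rintro x (⟨-, hx⟩ | rfl)
    · filter_upwards [hx] with y hy hxy hyb using hy ⟨hxy, hyb⟩
    · exact ae_of_all _ fun y hby hyb => absurd hby (lt_asymm hyb)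
  filter_upwards [key] with y hy hyb using hy hyb.1 hyb.2

lemma left_le_alphaH : a ≤ alphaH h a b :=
  le_csSup ((bddAbove_Ioo.mono fun _ hx => hx.1).union bddAbove_singleton) (Or.inr rfl)

lemma betaH_le_right : betaH h a b ≤ b :=
  csInf_le ((bddBelow_Ioo.mono fun _ hx => hx.1).union bddBelow_singleton) (Or.inr rfl)

lemma alphaH_lt_betaH (hhne : ¬ (∀ᵐ x ∂(volume : Measure ℝ), x ∈ Ioo a b → h x = 0)) :
    alphaH h a b < betaH h a b := by
  by_contra! hle
  refine hhne ?_
  filter_upwards [ae_eq_zero_of_mem_Ioo_alphaH, ae_eq_zero_of_mem_Ioo_betaH,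
    compl_mem_ae_iff.2 (measure_singleton (alphaH h a b))] with y hα hβ hyα hy
  rcases lt_or_gt_of_ne hyα with hlt | hgt
  · exact hα ⟨hy.1, hlt⟩
  · exact hβ ⟨hle.trans_lt hgt, hy.2⟩

lemma thetaBar_mem_Ioo (hhne : ¬ (∀ᵐ x ∂(volume : Measure ℝ), x ∈ Ioo a b → h x = 0)) :
    thetaBar h a b ∈ Ioo a b := by
  have := alphaH_lt_betaH hhne
  have : a ≤ alphaH h a b := left_le_alphaH
  have : betaH h a b ≤ b := betaH_le_right
  constructor <;> unfold thetaBar <;> linarith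

lemma thetaLow_nonneg (hhne : ¬ (∀ᵐ x ∂(volume : Measure ℝ), x ∈ Ioo a b → h x = 0)) :
    0 ≤ thetaLow h a b := by
  have := alphaH_lt_betaH hhne
  have : a ≤ alphaH h a b := left_le_alphaH
  have : betaH h a b ≤ b := betaH_le_right
  exact le_min (div_nonneg zero_le_one (by linarith)) (div_nonneg zero_le_one (by linarith))

lemma thetaLow_mul_thetaBar_sub_left_le_one
    (hhne : ¬ (∀ᵐ x ∂(volume : Measure ℝ), x ∈ Ioo a b → h x = 0)) :
    thetaLow h a b * (thetaBar h a b - a) ≤ 1 := by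
  have := alphaH_lt_betaH hhne
  have : a ≤ alphaH h a b := left_le_alphaH
  calc thetaLow h a b * (thetaBar h a b - a)
      ≤ 1 / (betaH h a b - a) * (betaH h a b - a) := by
        refine mul_le_mul (min_le_left _ _) ?_ ?_ (div_nonneg zero_le_one (by linarith)) <;>
          unfold thetaBar <;> linarith
    _ = 1 := one_div_mul_cancel (by linarith)

lemma thetaLow_mul_right_sub_thetaBar_le_one
    (hhne : ¬ (∀ᵐ x ∂(volume : Measure ℝ), x ∈ Ioo a b → h x = 0)) :
    thetaLow h a b * (b - thetaBar h a b) ≤ 1 := by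
  have := alphaH_lt_betaH hhne
  have : betaH h a b ≤ b := betaH_le_right
  calc thetaLow h a b * (b - thetaBar h a b)
      ≤ 1 / (b - alphaH h a b) * (b - alphaH h a b) := by
        refine mul_le_mul (min_le_right _ _) ?_ ?_ (div_nonneg zero_le_one (by linarith)) <;>
          unfold thetaBar <;> linarith
    _ = 1 := one_div_mul_cancel (by linarith)

end SupportHull

section AntitoneDeriv

variable {v v' : ℝ → ℝ} {a b : ℝ}

lemma mul_deriv_le_sub_le_mul_deriv_of_antitoneOn (hc : ContinuousOn v (Icc a b))
    (hd : ∀ z ∈ Ioo a b, HasDerivAt v (v' z) z) (hanti : AntitoneOn v' (Icc a b))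
    {x y : ℝ} (hx : x ∈ Icc a b) (hy : y ∈ Icc a b) (hxy : x ≤ y) :
    (y - x) * v' y ≤ v y - v x ∧ v y - v x ≤ (y - x) * v' x := by
  obtain rfl | hlt := hxy.eq_or_lt
  · simp
  obtain ⟨c, hcxy, hslope⟩ := exists_hasDerivAt_eq_slope v v' hlt
    (hc.mono (Icc_subset_Icc hx.1 hy.2)) fun z hz => hd z ⟨hx.1.trans_lt hz.1, hz.2.trans_le hy.2⟩
  have hcI : c ∈ Icc a b := ⟨hx.1.trans hcxy.1.le, hcxy.2.le.trans hy.2⟩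
  have hmvt : v y - v x = (y - x) * v' c := by
    rw [hslope]
    field_simp [(sub_pos.2 hlt).ne']
  rw [hmvt]
  exact ⟨mul_le_mul_of_nonneg_left (hanti hcI hy hcxy.2.le) (sub_nonneg.2 hxy),
    mul_le_mul_of_nonneg_left (hanti hx hcI hcxy.1.le) (sub_nonneg.2 hxy)⟩

lemma sub_mul_add_sub_mul_le_of_antitoneOn (hc : ContinuousOn v (Icc a b))
    (hd : ∀ z ∈ Ioo a b, HasDerivAt v (v' z) z) (hanti : AntitoneOn v' (Icc a b))
    {x y z : ℝ} (hx : a ≤ x) (hxy : x ≤ y) (hyz : y ≤ z) (hz : z ≤ b) :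
    (z - y) * v x + (y - x) * v z ≤ (z - x) * v y := by
  have hxI : x ∈ Icc a b := ⟨hx, hxy.trans (hyz.trans hz)⟩
  have hyI : y ∈ Icc a b := ⟨hx.trans hxy, hyz.trans hz⟩
  have hzI : z ∈ Icc a b := ⟨(hx.trans hxy).trans hyz, hz⟩
  have hleft := (mul_deriv_le_sub_le_mul_deriv_of_antitoneOn hc hd hanti hxI hyI hxy).1
  have hright := (mul_deriv_le_sub_le_mul_deriv_of_antitoneOn hc hd hanti hyI hzI hyz).2
  nlinarith [mul_le_mul_of_nonneg_left hleft (sub_nonneg.2 hyz),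
    mul_le_mul_of_nonneg_left hright (sub_nonneg.2 hxy)]

lemma le_mul_deltaOmega_of_antitoneOn (hc : ContinuousOn v (Icc a b))
    (hd : ∀ z ∈ Ioo a b, HasDerivAt v (v' z) z) (hanti : AntitoneOn v' (Icc a b))
    (hva : v a = 0) (hvb : v b = 0) {K x : ℝ} (hKa : v' a ≤ K) (hKb : -v' b ≤ K)
    (hx : x ∈ Icc a b) : v x ≤ K * deltaOmega a b x := by
  have hb : b ∈ Icc a b := ⟨hx.1.trans hx.2, le_rfl⟩
  have hleft := (mul_deriv_le_sub_le_mul_deriv_of_antitoneOn hc hd hanti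
    ⟨le_rfl, hx.1.trans hx.2⟩ hx hx.1).2
  have hright := (mul_deriv_le_sub_le_mul_deriv_of_antitoneOn hc hd hanti hx hb hx.2).1
  rw [hva, sub_zero] at hleft
  rw [hvb] at hright
  rcases le_total (x - a) (b - x) with hδ | hδ
  · rw [deltaOmega, min_eq_left hδ]
    nlinarith [mul_le_mul_of_nonneg_left hKa (sub_nonneg.2 hx.1)]
  · rw [deltaOmega, min_eq_right hδ]
    nlinarith [mul_le_mul_of_nonneg_left hKb (sub_nonneg.2 hx.2)]

lemma mul_deltaOmega_le_of_antitoneOn (hc : ContinuousOn v (Icc a b))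
    (hd : ∀ z ∈ Ioo a b, HasDerivAt v (v' z) z) (hanti : AntitoneOn v' (Icc a b))
    (hva : v a = 0) (hvb : v b = 0) {θ m x : ℝ} (hm : m ∈ Ioo a b) (hθ : 0 ≤ θ)
    (hθa : θ * (m - a) ≤ 1) (hθb : θ * (b - m) ≤ 1) (hx : x ∈ Icc a b) :
    θ * v m * deltaOmega a b x ≤ v x := by
  have hnonneg : ∀ y ∈ Icc a b, 0 ≤ v y := fun y hy => by
    have hab : 0 < b - a := sub_pos.2 (hm.1.trans hm.2)
    have := sub_mul_add_sub_mul_le_of_antitoneOn hc hd hanti le_rfl hy.1 hy.2 le_rfl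
    rw [hva, hvb, mul_zero, mul_zero, add_zero] at this
    exact (mul_nonneg_iff_of_pos_left hab).1 this
  have hvm := hnonneg m (Ioo_subset_Icc_self hm)
  have hvx := hnonneg x hx
  rcases le_total x m with hxm | hmx
  · have hchord := sub_mul_add_sub_mul_le_of_antitoneOn hc hd hanti le_rfl hx.1 hxm hm.2.le
    rw [hva, mul_zero, zero_add] at hchord
    calc θ * v m * deltaOmega a b x
        ≤ θ * v m * (x - a) := mul_le_mul_of_nonneg_left (min_le_left _ _) (mul_nonneg hθ hvm)
      _ = θ * ((x - a) * v m) := by ring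
      _ ≤ θ * ((m - a) * v x) := mul_le_mul_of_nonneg_left hchord hθ
      _ = θ * (m - a) * v x := by ring
      _ ≤ v x := mul_le_of_le_one_left hvx hθa
  · have hchord := sub_mul_add_sub_mul_le_of_antitoneOn hc hd hanti hm.1.le hmx hx.2 le_rfl
    rw [hvb, mul_zero, add_zero] at hchord
    calc θ * v m * deltaOmega a b x
        ≤ θ * v m * (b - x) := mul_le_mul_of_nonneg_left (min_le_right _ _) (mul_nonneg hθ hvm)
      _ = θ * ((b - x) * v m) := by ring
      _ ≤ θ * ((b - m) * v x) := mul_le_mul_of_nonneg_left hchord hθ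
      _ = θ * (b - m) * v x := by ring
      _ ≤ v x := mul_le_of_le_one_left hvx hθb

end AntitoneDeriv

lemma intervalIntegral_nonneg_of_ae_Ioo {h : ℝ → ℝ} {a b x y : ℝ}
    (hh0 : ∀ᵐ s ∂(volume : Measure ℝ), s ∈ Ioo a b → 0 ≤ h s)
    (hax : a ≤ x) (hxy : x ≤ y) (hyb : y ≤ b) : 0 ≤ ∫ s in x..y, h s := by
  rw [intervalIntegral.integral_of_le hxy, integral_Ioc_eq_integral_Ioo]
  refine setIntegral_nonneg_of_ae_restrict ((ae_restrict_iff' measurableSet_Ioo).2 ?_)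
  filter_upwards [hh0] with s hs hsxy using hs ⟨hax.trans_lt hsxy.1, hsxy.2.trans_le hyb⟩

lemma C1On.hasDerivAt {v v' : ℝ → ℝ} {a b x : ℝ} (hv : C1On v v' a b) (hx : x ∈ Ioo a b) :
    HasDerivAt v (v' x) x :=
  (hv.2.2 x (Ioo_subset_Icc_self hx)).hasDerivAt (Icc_mem_nhds hx.1 hx.2)

namespace IsSolutionH

variable {φ h v v' : ℝ → ℝ} {a b : ℝ}

lemma sub_eq_intervalIntegral (hv : IsSolutionH φ h a b v v') (hh : IntegrableOn h (Icc a b))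
    {x y : ℝ} (hx : x ∈ Icc a b) (hy : y ∈ Icc a b) :
    φ (v' x) - φ (v' y) = ∫ s in x..y, h s := by
  have ha : a ∈ Icc a b := ⟨le_rfl, hx.1.trans hx.2⟩
  rw [hv.2.2.2 x hx, hv.2.2.2 y hy, ← intervalIntegral.integral_add_adjacent_intervals
    (hh.mono_set (uIcc_subset_Icc ha hx)).intervalIntegrable
    (hh.mono_set (uIcc_subset_Icc hx hy)).intervalIntegrable]
  ring

lemma antitoneOn_deriv (hv : IsSolutionH φ h a b v v') (hφ : StrictMono φ)
    (hh : IntegrableOn h (Icc a b))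
    (hh0 : ∀ᵐ x ∂(volume : Measure ℝ), x ∈ Ioo a b → 0 ≤ h x) :
    AntitoneOn v' (Icc a b) := fun x hx y hy hxy => by
  rw [← hφ.le_iff_le, ← sub_nonneg, hv.sub_eq_intervalIntegral hh hx hy]
  exact intervalIntegral_nonneg_of_ae_Ioo hh0 hx.1 hxy hy.2

lemma deriv_endpoints_le_invFun (hv : IsSolutionH φ h a b v v') (hφ : OddIncHomeo φ)
    (hh : IntegrableOn h (Icc a b))
    (hh0 : ∀ᵐ x ∂(volume : Measure ℝ), x ∈ Ioo a b → 0 ≤ h x) (hab : a < b) :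
    v' a ≤ Function.invFun φ (∫ s in a..b, h s) ∧ -v' b ≤ Function.invFun φ (∫ s in a..b, h s) := by
  have ha : a ∈ Icc a b := left_mem_Icc.2 hab.le
  have hb : b ∈ Icc a b := right_mem_Icc.2 hab.le
  have hmvt := mul_deriv_le_sub_le_mul_deriv_of_antitoneOn hv.1.1 (fun _ => hv.1.hasDerivAt)
    (hv.antitoneOn_deriv hφ.1 hh hh0) ha hb hab.le
  rw [hv.2.1, hv.2.2.1, sub_self] at hmvt
  -- `v' a ≥ 0 ≥ v' b`, so `φ (v' a)` and `-φ (v' b)` are both at most their sum `∫ h`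
  have hva : 0 ≤ φ (v' a) :=
    hφ.map_zero ▸ hφ.1.monotone ((mul_nonneg_iff_of_pos_left (sub_pos.2 hab)).1 hmvt.2)
  have hvb : φ (v' b) ≤ 0 :=
    hφ.map_zero ▸ hφ.1.monotone ((mul_nonpos_iff_pos_imp_nonpos.1 hmvt.1).1 (sub_pos.2 hab))
  have hsub := hv.sub_eq_intervalIntegral hh ha hb
  rw [hφ.le_invFun_iff, hφ.le_invFun_iff, hφ.2.2.2]
  constructor <;> linarith

lemma intervalIntegral_invFun_le_of_deriv_nonneg (hv : IsSolutionH φ h a b v v')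
    (hφ : OddIncHomeo φ) (hh : IntegrableOn h (Icc a b)) {m : ℝ} (hm : m ∈ Icc a b)
    (hpos : 0 ≤ v' m) : ∫ y in a..m, Function.invFun φ (∫ s in y..m, h s) ≤ v m := by
  have hI : IntegrableOn h (uIcc a m) :=
    hh.mono_set (uIcc_subset_Icc (left_mem_Icc.2 (hm.1.trans hm.2)) hm)
  have hcont := hφ.continuous_invFun.comp_continuousOn
    (intervalIntegral.continuousOn_primitive_interval_left hI)
  rw [uIcc_of_le hm.1] at hcont
  have := intervalIntegral.integral_le_sub_of_hasDeriv_right_of_le hm.1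
    (hv.1.1.mono (Icc_subset_Icc_right hm.2))
    (fun y hy => (hv.1.hasDerivAt ⟨hy.1, hy.2.trans_le hm.2⟩).hasDerivWithinAt)
    hcont.integrableOn_Icc fun y hy => by
      have hyI : y ∈ Icc a b := ⟨hy.1.le, hy.2.le.trans hm.2⟩
      rw [Function.comp_apply, hφ.invFun_le_iff, ← hv.sub_eq_intervalIntegral hh hyI hm]
      linarith [hφ.map_zero ▸ hφ.1.monotone hpos]
  rwa [hv.2.1, sub_zero] at this

lemma intervalIntegral_invFun_le_of_deriv_nonpos (hv : IsSolutionH φ h a b v v')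
    (hφ : OddIncHomeo φ) (hh : IntegrableOn h (Icc a b)) {m : ℝ} (hm : m ∈ Icc a b)
    (hneg : v' m ≤ 0) : ∫ y in m..b, Function.invFun φ (∫ s in m..y, h s) ≤ v m := by
  have hI : IntegrableOn h (uIcc m b) :=
    hh.mono_set (uIcc_subset_Icc hm (right_mem_Icc.2 (hm.1.trans hm.2)))
  have hcont := hφ.continuous_invFun.comp_continuousOn
    (intervalIntegral.continuousOn_primitive_interval hI)
  rw [uIcc_of_le hm.2] at hcont
  have := intervalIntegral.integral_le_sub_of_hasDeriv_right_of_le (g := fun y => -v y) hm.2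
    (hv.1.1.mono (Icc_subset_Icc_left hm.1)).neg
    (fun y hy => (hv.1.hasDerivAt ⟨hm.1.trans_lt hy.1, hy.2⟩).neg.hasDerivWithinAt)
    hcont.integrableOn_Icc fun y hy => by
      have hyI : y ∈ Icc a b := ⟨hm.1.trans hy.1.le, hy.2.le⟩
      rw [Function.comp_apply, hφ.invFun_le_iff, hφ.2.2.2,
        ← hv.sub_eq_intervalIntegral hh hm hyI]
      linarith [hφ.map_zero ▸ hφ.1.monotone hneg]
  rwa [hv.2.2.1, neg_zero, zero_sub, neg_neg] at this

lemma min_intervalIntegral_invFun_le (hv : IsSolutionH φ h a b v v') (hφ : OddIncHomeo φ)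
    (hh : IntegrableOn h (Icc a b)) {m : ℝ} (hm : m ∈ Icc a b) :
    min (∫ y in a..m, Function.invFun φ (∫ s in y..m, h s))
        (∫ y in m..b, Function.invFun φ (∫ s in m..y, h s)) ≤ v m := by
  rcases le_total 0 (v' m) with hpos | hneg
  · exact (min_le_left _ _).trans (hv.intervalIntegral_invFun_le_of_deriv_nonneg hφ hh hm hpos)
  · exact (min_le_right _ _).trans (hv.intervalIntegral_invFun_le_of_deriv_nonpos hφ hh hm hneg)

end IsSolutionH

theorem pointwise_bounds_for_solution
    (a b : ℝ) (hab : a < b) (φ : ℝ → ℝ) (hφ : OddIncHomeo φ)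
    (h : ℝ → ℝ) (hh : IntegrableOn h (Icc a b))
    (hh0 : ∀ᵐ x ∂(volume : Measure ℝ), x ∈ Ioo a b → 0 ≤ h x)
    (hhne : ¬ (∀ᵐ x ∂(volume : Measure ℝ), x ∈ Ioo a b → h x = 0))
    (v v' : ℝ → ℝ) (hv : IsSolutionH φ h a b v v') :
    ∀ x ∈ Icc a b,
      thetaLow h a b *
        min (∫ y in a..(thetaBar h a b), Function.invFun φ (∫ s in y..(thetaBar h a b), h s))
            (∫ y in (thetaBar h a b)..b, Function.invFun φ (∫ s in (thetaBar h a b)..y, h s))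
        * deltaOmega a b x ≤ v x ∧
      v x ≤ Function.invFun φ (∫ s in a..b, h s) * deltaOmega a b x := by
  intro x hx
  have hd : ∀ y ∈ Ioo a b, HasDerivAt v (v' y) y := fun _ => hv.1.hasDerivAt
  have hanti := hv.antitoneOn_deriv hφ.1 hh hh0
  have hm := thetaBar_mem_Ioo hhne
  have hθ := thetaLow_nonneg hhne
  have hδ : 0 ≤ deltaOmega a b x := le_min (sub_nonneg.2 hx.1) (sub_nonneg.2 hx.2)
  obtain ⟨hKa, hKb⟩ := hv.deriv_endpoints_le_invFun hφ hh hh0 hab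
  refine ⟨?_, le_mul_deltaOmega_of_antitoneOn hv.1.1 hd hanti hv.2.1 hv.2.2.1 hKa hKb hx⟩
  calc _ ≤ thetaLow h a b * v (thetaBar h a b) * deltaOmega a b x :=
        mul_le_mul_of_nonneg_right (mul_le_mul_of_nonneg_left
          (hv.min_intervalIntegral_invFun_le hφ hh (Ioo_subset_Icc_self hm)) hθ) hδ
    _ ≤ v x := mul_deltaOmega_le_of_antitoneOn hv.1.1 hd hanti hv.2.1 hv.2.2.1 hm hθ
        (thetaLow_mul_thetaBar_sub_left_le_one hhne)
        (thetaLow_mul_right_sub_thetaBar_le_one hhne) hx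
end

section
/- Let 0 ≤ h ∈ L¹(a,b) with h ≢ 0. Then there exists c > 0 such that for every M > 0: min{ ∫_a^{θ̄_h} φ⁻¹(M ∫_y^{θ̄_h} h(s) ds) dy , ∫_{θ̄_h}^b φ⁻¹(M ∫_{θ̄_h}^y h(s) ds) dy } ≥ c · φ⁻¹(c M). -/
open MeasureTheory Set Filter
open Topology

theorem scaled_lower_bound
    (a b : ℝ) (hab : a < b) (φ : ℝ → ℝ) (hφ : OddIncHomeo φ)
    (h : ℝ → ℝ) (hh : IntegrableOn h (Icc a b))
    (hh0 : ∀ᵐ x ∂(volume : Measure ℝ), x ∈ Ioo a b → 0 ≤ h x)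
    (hhne : ¬ (∀ᵐ x ∂(volume : Measure ℝ), x ∈ Ioo a b → h x = 0)) :
    ∃ c : ℝ, 0 < c ∧ ∀ M : ℝ, 0 < M →
      c * Function.invFun φ (c * M) ≤
        min (∫ y in a..(thetaBar h a b),
              Function.invFun φ (M * ∫ s in y..(thetaBar h a b), h s))
            (∫ y in (thetaBar h a b)..b,
              Function.invFun φ (M * ∫ s in (thetaBar h a b)..y, h s)) := by
  obtain ⟨hmono, hcont, hsurj, hodd⟩ := hφ
  set ψ := Function.invFun φ with hψdef
  have hinj : Function.Injective φ := hmono.injective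
  have hrinv : ∀ x, φ (ψ x) = x := fun x => Function.invFun_eq (hsurj x)
  have hψmono : Monotone ψ := by
    intro u v huv
    by_contra hlt
    push_neg at hlt
    have h2 := hmono hlt
    rw [hrinv, hrinv] at h2
    exact absurd huv (not_le.mpr h2)
  have hφ0 : φ 0 = 0 := by have h0 := hodd 0; simp at h0; linarith
  have hψ0 : ψ 0 = 0 := hinj (by rw [hrinv, hφ0])
  have hψcont : Continuous ψ := by
    let e := StrictMono.orderIsoOfSurjective φ hmono hsurj
    have he : ψ = ⇑e.symm := by
      funext x
      apply hinj
      rw [hrinv]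
      exact (StrictMono.orderIsoOfSurjective_self_symm_apply φ hmono hsurj x).symm
    rw [he]
    exact e.symm.continuous
  -- abbreviations for α, β, θ
  set Aset : Set ℝ :=
    ({x | x ∈ Ioo a b ∧ ∀ᵐ y ∂(volume : Measure ℝ), y ∈ Ioo a x → h y = 0} ∪ {a}) with hAset
  set Bset : Set ℝ :=
    ({x | x ∈ Ioo a b ∧ ∀ᵐ y ∂(volume : Measure ℝ), y ∈ Ioo x b → h y = 0} ∪ {b}) with hBset
  have hαdef : alphaH h a b = sSup Aset := rfl
  have hβdef : betaH h a b = sInf Bset := rfl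
  set α := alphaH h a b with hα
  set β := betaH h a b with hβ
  have hAne : Aset.Nonempty := ⟨a, Or.inr rfl⟩
  have hBne : Bset.Nonempty := ⟨b, Or.inr rfl⟩
  have hAbdd : BddAbove Aset := by
    refine ⟨b, fun x hx => ?_⟩
    rcases hx with hx | hx
    · exact hx.1.2.le
    · simp only [mem_singleton_iff] at hx; rw [hx]; exact hab.le
  have hBbdd : BddBelow Bset := by
    refine ⟨a, fun x hx => ?_⟩
    rcases hx with hx | hx
    · exact hx.1.1.le
    · simp only [mem_singleton_iff] at hx; rw [hx]; exact hab.le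
  have haα : a ≤ α := le_csSup hAbdd (Or.inr rfl)
  have hαb : α ≤ b := csSup_le hAne (fun x hx => by
    rcases hx with hx | hx
    · exact hx.1.2.le
    · simp only [mem_singleton_iff] at hx; rw [hx]; exact hab.le)
  have hβb : β ≤ b := csInf_le hBbdd (Or.inr rfl)
  have haβ : a ≤ β := le_csInf hBne (fun x hx => by
    rcases hx with hx | hx
    · exact hx.1.1.le
    · simp only [mem_singleton_iff] at hx; rw [hx]; exact hab.le)
  -- h vanishes a.e. on (a, α)
  have hA0 : ∀ᵐ y ∂(volume : Measure ℝ), y ∈ Ioo a α → h y = 0 := by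
    obtain ⟨u, hu_mono, hu_tend, hu_mem⟩ := exists_seq_tendsto_sSup hAne hAbdd
    rw [← hαdef] at hu_tend
    have hall : ∀ᵐ y ∂(volume : Measure ℝ), ∀ n : ℕ, y ∈ Ioo a (u n) → h y = 0 := by
      rw [ae_all_iff]
      intro n
      rcases hu_mem n with hmem | hmem
      · exact hmem.2
      · simp only [mem_singleton_iff] at hmem
        filter_upwards with y hy
        rw [hmem] at hy
        exact absurd hy (by simp)
    filter_upwards [hall] with y hy hymem
    obtain ⟨n, hn⟩ : ∃ n, y < u n := by
      by_contra hcon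
      push_neg at hcon
      have : α ≤ y := le_of_tendsto hu_tend (Eventually.of_forall hcon)
      exact absurd hymem.2 (not_lt.mpr this)
    exact hy n ⟨hymem.1, hn⟩
  -- h vanishes a.e. on (β, b)
  have hB0 : ∀ᵐ y ∂(volume : Measure ℝ), y ∈ Ioo β b → h y = 0 := by
    obtain ⟨u, hu_mono, hu_tend, hu_mem⟩ := exists_seq_tendsto_sInf hBne hBbdd
    rw [← hβdef] at hu_tend
    have hall : ∀ᵐ y ∂(volume : Measure ℝ), ∀ n : ℕ, y ∈ Ioo (u n) b → h y = 0 := by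
      rw [ae_all_iff]
      intro n
      rcases hu_mem n with hmem | hmem
      · exact hmem.2
      · simp only [mem_singleton_iff] at hmem
        filter_upwards with y hy
        rw [hmem] at hy
        exact absurd hy (by simp)
    filter_upwards [hall] with y hy hymem
    obtain ⟨n, hn⟩ : ∃ n, u n < y := by
      by_contra hcon
      push_neg at hcon
      have : y ≤ β := ge_of_tendsto hu_tend (Eventually.of_forall hcon)
      exact absurd hymem.1 (not_lt.mpr this)
    exact hy n ⟨hn, hymem.2⟩
  -- α < β
  have hαβ : α < β := by
    by_contra hcon
    push_neg at hcon
    apply hhne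
    have hne_a : ∀ᵐ (y : ℝ) ∂(volume : Measure ℝ), y ≠ α := by
      rw [ae_iff]
      have : {y : ℝ | ¬ y ≠ α} = {α} := by ext y; simp
      rw [this]
      exact Real.volume_singleton
    filter_upwards [hA0, hB0, hne_a] with y h1 h2 h3 hy
    rcases lt_or_ge y α with hlt | hle
    · exact h1 ⟨hy.1, hlt⟩
    · have : β < y := lt_of_le_of_lt hcon (lt_of_le_of_ne hle (Ne.symm h3))
      exact h2 ⟨this, hy.2⟩
  set θ := thetaBar h a b with hθ
  have hθeq : θ = (α + β) / 2 := rfl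
  have haθ : a < θ := by rw [hθeq]; linarith
  have hθb : θ < b := by rw [hθeq]; linarith
  have hαθ : α < θ := by rw [hθeq]; linarith
  have hθβ : θ < β := by rw [hθeq]; linarith
  have hinth : IntervalIntegrable h volume a b := by
    apply MeasureTheory.IntegrableOn.intervalIntegrable
    rwa [uIcc_of_le hab.le]
  -- nonnegativity of interval integrals of h over subintervals of [a,b]
  have hIntNonneg : ∀ x y : ℝ, a ≤ x → x ≤ y → y ≤ b → 0 ≤ ∫ s in x..y, h s := by
    intro x y hax hxy hyb
    rw [intervalIntegral.integral_of_le hxy, integral_Ioc_eq_integral_Ioo]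
    apply setIntegral_nonneg_ae measurableSet_Ioo
    filter_upwards [hh0] with s hs hmem
    exact hs ⟨lt_of_le_of_lt hax hmem.1, lt_of_lt_of_le hmem.2 hyb⟩
  -- positivity of the two central integrals
  have hpos : ∀ x y : ℝ, a ≤ x → x < y → y ≤ b →
      (¬ ∀ᵐ s ∂(volume : Measure ℝ), s ∈ Ioo x y → h s = 0) → 0 < ∫ s in x..y, h s := by
    intro x y hax hxy hyb hne
    rcases lt_or_eq_of_le (hIntNonneg x y hax hxy.le hyb) with hlt | heq
    · exact hlt
    exfalso
    apply hne
    have hint' : IntegrableOn h (Ioo x y) := hh.mono_set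
      (fun s hs => ⟨le_of_lt (lt_of_le_of_lt hax hs.1), le_of_lt (lt_of_lt_of_le hs.2 hyb)⟩)
    have hnon : 0 ≤ᵐ[(volume : Measure ℝ).restrict (Ioo x y)] h := by
      rw [EventuallyLE, ae_restrict_iff' measurableSet_Ioo]
      filter_upwards [hh0] with s hs hmem
      exact hs ⟨lt_of_le_of_lt hax hmem.1, lt_of_lt_of_le hmem.2 hyb⟩
    have h0 : ∫ s in Ioo x y, h s = 0 := by
      rw [intervalIntegral.integral_of_le hxy.le, integral_Ioc_eq_integral_Ioo] at heq
      exact heq.symm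
    have := (integral_eq_zero_iff_of_nonneg_ae hnon hint').mp h0
    rw [EventuallyEq, ae_restrict_iff' measurableSet_Ioo] at this
    filter_upwards [this] with s hs hmem
    exact hs hmem
  have hε₁ : 0 < ∫ s in a..θ, h s := by
    apply hpos a θ le_rfl haθ hθb.le
    intro hzero
    have hθA : θ ∈ Aset := Or.inl ⟨⟨haθ, hθb⟩, hzero⟩
    have : θ ≤ α := le_csSup hAbdd hθA
    exact absurd this (not_le.mpr hαθ)
  have hε₂ : 0 < ∫ s in θ..b, h s := by
    apply hpos θ b haθ.le hθb le_rfl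
    intro hzero
    have hθB : θ ∈ Bset := Or.inl ⟨⟨haθ, hθb⟩, hzero⟩
    have : β ≤ θ := csInf_le hBbdd hθB
    exact absurd this (not_le.mpr hθβ)
  set ε₁ := ∫ s in a..θ, h s with hε₁def
  set ε₂ := ∫ s in θ..b, h s with hε₂def
  -- choose p ∈ (a, θ) with ε₁/2 < ∫_p^θ h
  have hFcont : ContinuousOn (fun y => ∫ s in y..θ, h s) (Icc a θ) := by
    have hint' : IntegrableOn h (uIcc a θ) := by
      rw [uIcc_of_le haθ.le]
      exact hh.mono_set (Icc_subset_Icc le_rfl hθb.le)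
    have := intervalIntegral.continuousOn_primitive_interval_left hint'
    rwa [uIcc_of_le haθ.le] at this
  obtain ⟨p, hpF, hp⟩ : ∃ p, ε₁ / 2 < (∫ s in p..θ, h s) ∧ p ∈ Ioo a θ := by
    haveI : (𝓝[Ioo a θ] a).NeBot := by
      rw [← mem_closure_iff_nhdsWithin_neBot, closure_Ioo (ne_of_lt haθ)]
      exact ⟨le_rfl, haθ.le⟩
    have hFa : ContinuousWithinAt (fun y => ∫ s in y..θ, h s) (Icc a θ) a :=
      hFcont a (left_mem_Icc.mpr haθ.le)
    have hev : ∀ᶠ y in 𝓝[Icc a θ] a, ε₁ / 2 < ∫ s in y..θ, h s := by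
      apply hFa.eventually
      have : (∫ s in a..θ, h s) = ε₁ := rfl
      exact eventually_gt_nhds (by linarith)
    have hev2 : ∀ᶠ y in 𝓝[Ioo a θ] a, ε₁ / 2 < ∫ s in y..θ, h s :=
      hev.filter_mono (nhdsWithin_mono a Ioo_subset_Icc_self)
    exact (hev2.and eventually_mem_nhdsWithin).exists
  -- choose q ∈ (θ, b) with ε₂/2 < ∫_θ^q h
  have hGcont : ContinuousOn (fun y => ∫ s in θ..y, h s) (Icc θ b) := by
    have hint' : IntegrableOn h (uIcc θ b) := by
      rw [uIcc_of_le hθb.le]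
      exact hh.mono_set (Icc_subset_Icc haθ.le le_rfl)
    have := intervalIntegral.continuousOn_primitive_interval hint'
    rwa [uIcc_of_le hθb.le] at this
  obtain ⟨q, hqG, hq⟩ : ∃ q, ε₂ / 2 < (∫ s in θ..q, h s) ∧ q ∈ Ioo θ b := by
    haveI : (𝓝[Ioo θ b] b).NeBot := by
      rw [← mem_closure_iff_nhdsWithin_neBot, closure_Ioo (ne_of_lt hθb)]
      exact ⟨hθb.le, le_rfl⟩
    have hGb : ContinuousWithinAt (fun y => ∫ s in θ..y, h s) (Icc θ b) b :=
      hGcont b (right_mem_Icc.mpr hθb.le)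
    have hev : ∀ᶠ y in 𝓝[Icc θ b] b, ε₂ / 2 < ∫ s in θ..y, h s := by
      apply hGb.eventually
      have : (∫ s in θ..b, h s) = ε₂ := rfl
      exact eventually_gt_nhds (by linarith)
    have hev2 : ∀ᶠ y in 𝓝[Ioo θ b] b, ε₂ / 2 < ∫ s in θ..y, h s :=
      hev.filter_mono (nhdsWithin_mono b Ioo_subset_Icc_self)
    exact (hev2.and eventually_mem_nhdsWithin).exists
  -- the constant
  refine ⟨min (min (p - a) (b - q)) (min (ε₁ / 2) (ε₂ / 2)), ?_, ?_⟩
  · apply lt_min (lt_min (by linarith [hp.1]) (by linarith [hq.2]))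
    exact lt_min (by linarith) (by linarith)
  intro M hM
  set c := min (min (p - a) (b - q)) (min (ε₁ / 2) (ε₂ / 2)) with hcdef
  have hc : 0 < c := by
    apply lt_min (lt_min (by linarith [hp.1]) (by linarith [hq.2]))
    exact lt_min (by linarith) (by linarith)
  have hcM : 0 < c * M := mul_pos hc hM
  have hψcM0 : 0 ≤ ψ (c * M) := by rw [← hψ0]; exact hψmono hcM.le
  refine le_min ?_ ?_
  · -- left integral
    have hf₁cont : ContinuousOn (fun y => ψ (M * ∫ s in y..θ, h s)) (Icc a θ) :=
      hψcont.comp_continuousOn (continuousOn_const.mul hFcont)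
    have hf₁int : IntervalIntegrable (fun y => ψ (M * ∫ s in y..θ, h s)) volume a θ := by
      apply ContinuousOn.intervalIntegrable
      rwa [uIcc_of_le haθ.le]
    have hint_ap : IntervalIntegrable (fun y => ψ (M * ∫ s in y..θ, h s)) volume a p :=
      hf₁int.mono_set (by
        rw [uIcc_of_le hp.1.le, uIcc_of_le haθ.le]
        exact Icc_subset_Icc le_rfl hp.2.le)
    have hint_pθ : IntervalIntegrable (fun y => ψ (M * ∫ s in y..θ, h s)) volume p θ :=
      hf₁int.mono_set (by
        rw [uIcc_of_le hp.2.le, uIcc_of_le haθ.le]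
        exact Icc_subset_Icc hp.1.le le_rfl)
    have hsplit := intervalIntegral.integral_add_adjacent_intervals hint_ap hint_pθ
    have hnn : 0 ≤ ∫ y in p..θ, ψ (M * ∫ s in y..θ, h s) := by
      apply intervalIntegral.integral_nonneg hp.2.le
      intro y hy
      rw [← hψ0]
      apply hψmono
      exact mul_nonneg hM.le (hIntNonneg y θ (hp.1.le.trans hy.1) hy.2 hθb.le)
    have hlow : (p - a) * ψ (ε₁ / 2 * M) ≤ ∫ y in a..p, ψ (M * ∫ s in y..θ, h s) := by
      have hconst : IntervalIntegrable (fun _ : ℝ => ψ (ε₁ / 2 * M)) volume a p :=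
        intervalIntegrable_const
      have hmono' := intervalIntegral.integral_mono_on hp.1.le hconst hint_ap (fun y hy => by
        apply hψmono
        have hy2 : ε₁ / 2 ≤ ∫ s in y..θ, h s := by
          have hadd : (∫ s in y..p, h s) + ∫ s in p..θ, h s = ∫ s in y..θ, h s := by
            apply intervalIntegral.integral_add_adjacent_intervals
            · exact hinth.mono_set (by
                rw [uIcc_of_le hy.2, uIcc_of_le hab.le]
                exact Icc_subset_Icc hy.1 (hp.2.le.trans hθb.le))
            · exact hinth.mono_set (by
                rw [uIcc_of_le hp.2.le, uIcc_of_le hab.le]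
                exact Icc_subset_Icc hp.1.le hθb.le)
          have hnn2 : 0 ≤ ∫ s in y..p, h s :=
            hIntNonneg y p hy.1 hy.2 (hp.2.le.trans hθb.le)
          linarith
        calc ε₁ / 2 * M = M * (ε₁ / 2) := by ring
        _ ≤ M * ∫ s in y..θ, h s := by
          exact mul_le_mul_of_nonneg_left hy2 hM.le)
      rwa [intervalIntegral.integral_const, smul_eq_mul] at hmono'
    have hfinal : c * ψ (c * M) ≤ (p - a) * ψ (ε₁ / 2 * M) := by
      apply mul_le_mul
      · exact (min_le_left _ _).trans (min_le_left _ _)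
      · apply hψmono
        apply mul_le_mul_of_nonneg_right _ hM.le
        exact (min_le_right _ _).trans (min_le_left _ _)
      · exact hψcM0
      · linarith [hp.1]
    calc c * ψ (c * M) ≤ (p - a) * ψ (ε₁ / 2 * M) := hfinal
      _ ≤ ∫ y in a..p, ψ (M * ∫ s in y..θ, h s) := hlow
      _ ≤ (∫ y in a..p, ψ (M * ∫ s in y..θ, h s)) +
          ∫ y in p..θ, ψ (M * ∫ s in y..θ, h s) := by linarith
      _ = ∫ y in a..θ, ψ (M * ∫ s in y..θ, h s) := hsplit
  · -- right integral
    have hf₂cont : ContinuousOn (fun y => ψ (M * ∫ s in θ..y, h s)) (Icc θ b) :=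
      hψcont.comp_continuousOn (continuousOn_const.mul hGcont)
    have hf₂int : IntervalIntegrable (fun y => ψ (M * ∫ s in θ..y, h s)) volume θ b := by
      apply ContinuousOn.intervalIntegrable
      rwa [uIcc_of_le hθb.le]
    have hint_θq : IntervalIntegrable (fun y => ψ (M * ∫ s in θ..y, h s)) volume θ q :=
      hf₂int.mono_set (by
        rw [uIcc_of_le hq.1.le, uIcc_of_le hθb.le]
        exact Icc_subset_Icc le_rfl hq.2.le)
    have hint_qb : IntervalIntegrable (fun y => ψ (M * ∫ s in θ..y, h s)) volume q b :=
      hf₂int.mono_set (by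
        rw [uIcc_of_le hq.2.le, uIcc_of_le hθb.le]
        exact Icc_subset_Icc hq.1.le le_rfl)
    have hsplit := intervalIntegral.integral_add_adjacent_intervals hint_θq hint_qb
    have hnn : 0 ≤ ∫ y in θ..q, ψ (M * ∫ s in θ..y, h s) := by
      apply intervalIntegral.integral_nonneg hq.1.le
      intro y hy
      rw [← hψ0]
      apply hψmono
      exact mul_nonneg hM.le (hIntNonneg θ y haθ.le hy.1 (hy.2.trans hq.2.le))
    have hlow : (b - q) * ψ (ε₂ / 2 * M) ≤ ∫ y in q..b, ψ (M * ∫ s in θ..y, h s) := by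
      have hconst : IntervalIntegrable (fun _ : ℝ => ψ (ε₂ / 2 * M)) volume q b :=
        intervalIntegrable_const
      have hmono' := intervalIntegral.integral_mono_on hq.2.le hconst hint_qb (fun y hy => by
        apply hψmono
        have hy2 : ε₂ / 2 ≤ ∫ s in θ..y, h s := by
          have hadd : (∫ s in θ..q, h s) + ∫ s in q..y, h s = ∫ s in θ..y, h s := by
            apply intervalIntegral.integral_add_adjacent_intervals
            · exact hinth.mono_set (by
                rw [uIcc_of_le hq.1.le, uIcc_of_le hab.le]
                exact Icc_subset_Icc haθ.le (hq.2.le))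
            · exact hinth.mono_set (by
                rw [uIcc_of_le hy.1, uIcc_of_le hab.le]
                exact Icc_subset_Icc (haθ.le.trans hq.1.le) hy.2)
          have hnn2 : 0 ≤ ∫ s in q..y, h s :=
            hIntNonneg q y (haθ.le.trans hq.1.le) hy.1 hy.2
          linarith
        calc ε₂ / 2 * M = M * (ε₂ / 2) := by ring
        _ ≤ M * ∫ s in θ..y, h s := by
          exact mul_le_mul_of_nonneg_left hy2 hM.le)
      rwa [intervalIntegral.integral_const, smul_eq_mul] at hmono'
    have hfinal : c * ψ (c * M) ≤ (b - q) * ψ (ε₂ / 2 * M) := by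
      apply mul_le_mul
      · exact (min_le_left _ _).trans (min_le_right _ _)
      · apply hψmono
        apply mul_le_mul_of_nonneg_right _ hM.le
        exact (min_le_right _ _).trans (min_le_right _ _)
      · exact hψcM0
      · linarith [hq.2]
    calc c * ψ (c * M) ≤ (b - q) * ψ (ε₂ / 2 * M) := hfinal
      _ ≤ ∫ y in q..b, ψ (M * ∫ s in θ..y, h s) := hlow
      _ ≤ (∫ y in θ..q, ψ (M * ∫ s in θ..y, h s)) +
          ∫ y in q..b, ψ (M * ∫ s in θ..y, h s) := by linarith
      _ = ∫ y in θ..b, ψ (M * ∫ s in θ..y, h s) := hsplit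
end

section
/- Let φ : [0,∞) → [0,∞) be an increasing homeomorphism (a strictly increasing continuous bijection of [0,∞) with φ(0) = 0). The following three conditions are equivalent: (i) M(t,φ) < ∞ for all t > 0, the limits α_φ := lim_{t→0⁺} ln M(t,φ)/ln t and β_φ := lim_{t→∞} ln M(t,φ)/ln t exist in ℝ, and 0 < α_φ ≤ β_φ < ∞; (ii) (condition (Φ)) there exist increasing homeomorphisms ψ₁, ψ₂ : [0,∞) → [0,∞) such that ψ₁(t)φ(x) ≤ φ(tx) ≤ ψ₂(t)φ(x) for all t, x > 0; (iii) (condition (Φ′)) there exist an increasing homeomorphism ψ₁ : [0,∞) → [0,∞) and a function ψ₂ : [0,∞) → [0,∞) such that ψ₁(t)φ(x) ≤ φ(tx) ≤ ψ₂(t)φ(x) for all t, x > 0. -/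
open Set Filter

/-- `M(t,φ) = sup_{x>0} φ(tx)/φ(x)` (as a real-valued `sSup`; it is the honest
supremum whenever the set is bounded above). -/
noncomputable def Mfun (φ : ℝ → ℝ) (t : ℝ) : ℝ :=
  sSup ((fun x => φ (t * x) / φ x) '' Ioi 0)

/-- `ψ` is an increasing homeomorphism of `[0,∞)` onto itself. -/
def IncHomeoOnIci (ψ : ℝ → ℝ) : Prop :=
  ψ 0 = 0 ∧ StrictMonoOn ψ (Ici 0) ∧ ContinuousOn ψ (Ici 0) ∧
  MapsTo ψ (Ici 0) (Ici 0) ∧ SurjOn ψ (Ici 0) (Ici 0)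

/-! If `φ` satisfies (Φ′), the upper function makes every `M(t,φ)` finite and the lower
homeomorphism gives `M(t₀,φ) < 1` for some `t₀ < 1`. Since `M(·,φ)` is increasing and
submultiplicative, `f(s) = log M(eˢ,φ)` is monotone and subadditive, so by Fekete's lemma
`f(s)/s` converges at both ends of `ℝ`; the limit at `-∞` is positive because `f(log t₀) < 0`.
This is (i). Conversely, the indices give `M(t,φ) ≤ A·max(t^γ, t^δ)` for `0 < γ < α_φ` and
`δ > β_φ`, and `φ(x) ≤ M(1/t,φ) φ(tx)` turns this into the lower bound `A⁻¹·min(t^γ, t^δ)`;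
both bounds are increasing homeomorphisms, which is (Φ). -/

open Topology

theorem Monotone.tendsto_div_atTop_of_tendsto_natCast {f : ℝ → ℝ} (hf : Monotone f) {L : ℝ}
    (hL : Tendsto (fun n : ℕ => f n / n) atTop (𝓝 L)) :
    Tendsto (fun s => f s / s) atTop (𝓝 L) := by
  have hfloor : Tendsto (fun s : ℝ => f ⌊s⌋₊ / ⌊s⌋₊ * (⌊s⌋₊ / s)) atTop (𝓝 L) := by
    simpa using (hL.comp tendsto_nat_floor_atTop).mul tendsto_nat_floor_div_atTop
  have hceil : Tendsto (fun s : ℝ => f ⌈s⌉₊ / ⌈s⌉₊ * (⌈s⌉₊ / s)) atTop (𝓝 L) := by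
    simpa using (hL.comp tendsto_nat_ceil_atTop).mul tendsto_nat_ceil_div_atTop
  refine tendsto_of_tendsto_of_tendsto_of_le_of_le' hfloor hceil ?_ ?_ <;>
    filter_upwards [eventually_ge_atTop 1] with s hs
  · have hfloor_pos : (0 : ℝ) < ⌊s⌋₊ := by simpa [Nat.floor_pos] using hs
    rw [div_mul_div_cancel₀ hfloor_pos.ne']
    exact div_le_div_of_nonneg_right (hf (Nat.floor_le (by linarith))) (by linarith)
  · have hceil_pos : (0 : ℝ) < ⌈s⌉₊ := Nat.cast_pos.2 (Nat.ceil_pos.2 (by linarith))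
    rw [div_mul_div_cancel₀ hceil_pos.ne']
    exact div_le_div_of_nonneg_right (hf (Nat.le_ceil s)) (by linarith)

theorem Antitone.tendsto_div_atTop_of_tendsto_natCast {f : ℝ → ℝ} (hf : Antitone f) {L : ℝ}
    (hL : Tendsto (fun n : ℕ => f n / n) atTop (𝓝 L)) :
    Tendsto (fun s => f s / s) atTop (𝓝 L) := by
  have := hf.neg.tendsto_div_atTop_of_tendsto_natCast (L := -L) (by simpa [neg_div] using hL.neg)
  simpa [neg_div] using this.neg

theorem Monotone.exists_tendsto_div_of_subadditive {f : ℝ → ℝ} (hf : Monotone f)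
    (hsub : ∀ s t, f (s + t) ≤ f s + f t) {s₀ : ℝ} (hs₀ : 0 < s₀) (hneg : f (-s₀) < 0) :
    ∃ α β, 0 < α ∧ α ≤ β ∧ Tendsto (fun s => f s / s) atBot (𝓝 α) ∧
      Tendsto (fun s => f s / s) atTop (𝓝 β) := by
  have hf0 : 0 ≤ f 0 := by
    have := hsub 0 0
    rw [add_zero] at this
    linarith
  have hsym : ∀ n : ℕ, 0 ≤ f n / n + f (-n) / n := fun n => by
    rw [← add_div]
    have := hsub n (-n)
    rw [add_neg_cancel] at this
    exact div_nonneg (by linarith) n.cast_nonneg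
  have hup : Subadditive fun n : ℕ => f n := fun m n => by push_cast; exact hsub _ _
  have hup_bdd : BddBelow (range fun n : ℕ => f n / n) := by
    refine ⟨0, ?_⟩
    rintro _ ⟨n, rfl⟩
    exact div_nonneg (hf0.trans (hf n.cast_nonneg)) n.cast_nonneg
  have hβ := hup.tendsto_lim hup_bdd
  have hdown : Subadditive fun n : ℕ => f (-n) := fun m n => by
    push_cast
    rw [neg_add]
    exact hsub _ _
  have hdown_bdd : BddBelow (range fun n : ℕ => f (-n) / n) := by
    obtain ⟨B, hB⟩ := hβ.bddAbove_range
    refine ⟨-B, ?_⟩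
    rintro _ ⟨n, rfl⟩
    linarith [hsym n, hB ⟨n, rfl⟩]
  have hα := hdown.tendsto_lim hdown_bdd
  refine ⟨-hdown.lim, hup.lim, ?_, ?_, ?_, hf.tendsto_div_atTop_of_tendsto_natCast hβ⟩
  · have hn : ⌈s₀⌉₊ ≠ 0 := (Nat.ceil_pos.2 hs₀).ne'
    have hneg' : f (-⌈s₀⌉₊) / ⌈s₀⌉₊ < 0 :=
      div_neg_of_neg_of_pos ((hf (neg_le_neg (Nat.le_ceil s₀))).trans_lt hneg)
        (Nat.cast_pos.2 (Nat.ceil_pos.2 hs₀))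
    linarith [hdown.lim_le_div hdown_bdd hn]
  · exact le_of_tendsto_of_tendsto' hα.neg hβ fun n => by linarith [hsym n]
  · have hanti : Antitone fun s => f (-s) := hf.comp_antitone fun _ _ h => neg_le_neg h
    have := (hanti.tendsto_div_atTop_of_tendsto_natCast hα).neg.comp tendsto_neg_atBot_atTop
    refine this.congr fun s => ?_
    simp [div_neg]

namespace IncHomeoOnIci

variable {ψ ψ' : ℝ → ℝ}

theorem pos (hψ : IncHomeoOnIci ψ) {x : ℝ} (hx : 0 < x) : 0 < ψ x := by
  simpa [hψ.1] using hψ.2.1 self_mem_Ici (mem_Ici.2 hx.le) hx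

theorem monotoneOn (hψ : IncHomeoOnIci ψ) : MonotoneOn ψ (Ioi 0) :=
  hψ.2.1.monotoneOn.mono Ioi_subset_Ici_self

theorem tendsto_atTop (hψ : IncHomeoOnIci ψ) : Tendsto ψ atTop atTop := by
  refine Filter.tendsto_atTop.2 fun b => ?_
  obtain ⟨u, hu, hψu⟩ := hψ.2.2.2.2 (mem_Ici.2 (le_max_right b 0))
  filter_upwards [eventually_ge_atTop u] with t ht
  exact (le_max_left b 0).trans (hψu ▸ hψ.2.1.monotoneOn hu (mem_Ici.2 (le_trans hu ht)) ht)

theorem of_tendsto_atTop (h0 : ψ 0 = 0) (hmono : StrictMonoOn ψ (Ici 0))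
    (hcont : ContinuousOn ψ (Ici 0)) (htop : Tendsto ψ atTop atTop) : IncHomeoOnIci ψ := by
  refine ⟨h0, hmono, hcont, fun x hx => ?_, fun y hy => ?_⟩
  · rw [mem_Ici, ← h0]
    exact hmono.monotoneOn self_mem_Ici hx hx
  · obtain ⟨b, hb, hb0⟩ := ((htop.eventually_ge_atTop y).and (eventually_ge_atTop 0)).exists
    obtain ⟨x, hx, rfl⟩ := intermediate_value_Icc hb0 (hcont.mono Icc_subset_Ici_self)
      ⟨by rw [h0]; exact hy, hb⟩
    exact ⟨x, hx.1, rfl⟩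

theorem rpow {γ : ℝ} (hγ : 0 < γ) : IncHomeoOnIci fun t => t ^ γ :=
  of_tendsto_atTop (Real.zero_rpow hγ.ne') (fun _ hx _ _ hxy => Real.rpow_lt_rpow hx hxy hγ)
    (fun x _ => (Real.continuousAt_rpow_const x γ (Or.inr hγ.le)).continuousWithinAt)
    (tendsto_rpow_atTop hγ)

theorem const_mul (hψ : IncHomeoOnIci ψ) {c : ℝ} (hc : 0 < c) : IncHomeoOnIci fun t => c * ψ t :=
  of_tendsto_atTop (by simp [hψ.1])
    (fun _ hx _ hy hxy => mul_lt_mul_of_pos_left (hψ.2.1 hx hy hxy) hc)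
    (continuousOn_const.mul hψ.2.2.1) (hψ.tendsto_atTop.const_mul_atTop hc)

protected theorem max (hψ : IncHomeoOnIci ψ) (hψ' : IncHomeoOnIci ψ') :
    IncHomeoOnIci fun t => max (ψ t) (ψ' t) :=
  of_tendsto_atTop (by simp [hψ.1, hψ'.1])
    (fun _ hx _ hy hxy => max_lt_max (hψ.2.1 hx hy hxy) (hψ'.2.1 hx hy hxy))
    (ContinuousOn.sup hψ.2.2.1 hψ'.2.2.1)
    (tendsto_atTop_mono (fun _ => le_max_left _ _) hψ.tendsto_atTop)

protected theorem min (hψ : IncHomeoOnIci ψ) (hψ' : IncHomeoOnIci ψ') :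
    IncHomeoOnIci fun t => min (ψ t) (ψ' t) :=
  of_tendsto_atTop (by simp [hψ.1, hψ'.1])
    (fun _ hx _ hy hxy => min_lt_min (hψ.2.1 hx hy hxy) (hψ'.2.1 hx hy hxy))
    (ContinuousOn.inf hψ.2.2.1 hψ'.2.2.1)
    (tendsto_inf_atTop _ hψ.tendsto_atTop hψ'.tendsto_atTop)

end IncHomeoOnIci

section Mfun

variable {φ : ℝ → ℝ} {s t x c : ℝ}

theorem le_Mfun_mul (hpos : ∀ x, 0 < x → 0 < φ x)
    (hb : BddAbove ((fun x => φ (t * x) / φ x) '' Ioi 0)) (hx : 0 < x) :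
    φ (t * x) ≤ Mfun φ t * φ x :=
  (div_le_iff₀ (hpos x hx)).1 (le_csSup hb ⟨x, hx, rfl⟩)

theorem le_Mfun_inv_mul (hpos : ∀ x, 0 < x → 0 < φ x)
    (hb : BddAbove ((fun x => φ (t⁻¹ * x) / φ x) '' Ioi 0)) (ht : 0 < t) (hx : 0 < x) :
    φ x ≤ Mfun φ t⁻¹ * φ (t * x) := by
  simpa [inv_mul_cancel_left₀ ht.ne'] using le_Mfun_mul hpos hb (mul_pos ht hx)

theorem mem_upperBounds_of_le_mul (hpos : ∀ x, 0 < x → 0 < φ x)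
    (h : ∀ x, 0 < x → φ (t * x) ≤ c * φ x) :
    c ∈ upperBounds ((fun x => φ (t * x) / φ x) '' Ioi 0) := by
  rintro _ ⟨x, hx, rfl⟩
  exact (div_le_iff₀ (hpos x hx)).2 (h x hx)

theorem Mfun_le (hpos : ∀ x, 0 < x → 0 < φ x) (h : ∀ x, 0 < x → φ (t * x) ≤ c * φ x) :
    Mfun φ t ≤ c :=
  csSup_le (nonempty_Ioi.image _) (mem_upperBounds_of_le_mul hpos h)

theorem Mfun_pos (hpos : ∀ x, 0 < x → 0 < φ x)
    (hb : BddAbove ((fun x => φ (t * x) / φ x) '' Ioi 0)) (ht : 0 < t) : 0 < Mfun φ t :=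
  (div_pos (hpos _ (mul_pos ht one_pos)) (hpos 1 one_pos)).trans_le
    (le_csSup hb ⟨1, mem_Ioi.2 one_pos, rfl⟩)

theorem Mfun_inv_le_inv (hpos : ∀ x, 0 < x → 0 < φ x) (hc : 0 < c) (ht : 0 < t)
    (h : ∀ x, 0 < x → c * φ x ≤ φ (t * x)) : Mfun φ t⁻¹ ≤ c⁻¹ := by
  refine Mfun_le hpos fun x hx => ?_
  have := h (t⁻¹ * x) (by positivity)
  rw [mul_inv_cancel_left₀ ht.ne'] at this
  rwa [le_inv_mul_iff₀ hc]

theorem Mfun_mul_le (hpos : ∀ x, 0 < x → 0 < φ x)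
    (hbs : BddAbove ((fun x => φ (s * x) / φ x) '' Ioi 0))
    (hbt : BddAbove ((fun x => φ (t * x) / φ x) '' Ioi 0)) (hs : 0 < s) (ht : 0 < t) :
    Mfun φ (s * t) ≤ Mfun φ s * Mfun φ t := by
  refine Mfun_le hpos fun x hx => ?_
  calc φ (s * t * x) = φ (s * (t * x)) := by rw [mul_assoc]
    _ ≤ Mfun φ s * φ (t * x) := le_Mfun_mul hpos hbs (mul_pos ht hx)
    _ ≤ Mfun φ s * (Mfun φ t * φ x) := by
        gcongr
        exacts [(Mfun_pos hpos hbs hs).le, le_Mfun_mul hpos hbt hx]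
    _ = Mfun φ s * Mfun φ t * φ x := by ring

theorem monotoneOn_Mfun (hpos : ∀ x, 0 < x → 0 < φ x) (hmono : MonotoneOn φ (Ioi 0))
    (hbdd : ∀ t, 0 < t → BddAbove ((fun x => φ (t * x) / φ x) '' Ioi 0)) :
    MonotoneOn (Mfun φ) (Ioi 0) := by
  intro s hs t ht hst
  refine Mfun_le hpos fun x hx => ?_
  calc φ (s * x) ≤ φ (t * x) :=
        hmono (mul_pos hs hx) (mul_pos ht hx) (mul_le_mul_of_nonneg_right hst hx.le)
    _ ≤ Mfun φ t * φ x := le_Mfun_mul hpos (hbdd t ht) hx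

theorem monotone_log_Mfun_exp (hpos : ∀ x, 0 < x → 0 < φ x) (hmono : MonotoneOn φ (Ioi 0))
    (hbdd : ∀ t, 0 < t → BddAbove ((fun x => φ (t * x) / φ x) '' Ioi 0)) :
    Monotone fun s => Real.log (Mfun φ (Real.exp s)) := fun s s' h =>
  Real.log_le_log (Mfun_pos hpos (hbdd _ (Real.exp_pos s)) (Real.exp_pos s))
    (monotoneOn_Mfun hpos hmono hbdd (Real.exp_pos s) (Real.exp_pos s') (Real.exp_le_exp.2 h))

theorem log_Mfun_exp_add_le (hpos : ∀ x, 0 < x → 0 < φ x)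
    (hbdd : ∀ t, 0 < t → BddAbove ((fun x => φ (t * x) / φ x) '' Ioi 0)) (s s' : ℝ) :
    Real.log (Mfun φ (Real.exp (s + s'))) ≤
      Real.log (Mfun φ (Real.exp s)) + Real.log (Mfun φ (Real.exp s')) := by
  have hM : ∀ u, 0 < Mfun φ (Real.exp u) := fun u =>
    Mfun_pos hpos (hbdd _ (Real.exp_pos u)) (Real.exp_pos u)
  rw [Real.exp_add, ← Real.log_mul (hM s).ne' (hM s').ne']
  exact Real.log_le_log (by rw [← Real.exp_add]; exact hM _)
    (Mfun_mul_le hpos (hbdd _ (Real.exp_pos s)) (hbdd _ (Real.exp_pos s'))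
      (Real.exp_pos s) (Real.exp_pos s'))

end Mfun

theorem max_inv_eq_inv_min {K : Type*} [Field K] [LinearOrder K] [IsStrictOrderedRing K]
    {a b : K} (ha : 0 < a) (hb : 0 < b) : max a⁻¹ b⁻¹ = (min a b)⁻¹ := by
  rcases le_total a b with h | h
  · rw [min_eq_left h, max_eq_left (inv_anti₀ ha h)]
  · rw [min_eq_right h, max_eq_right (inv_anti₀ hb h)]

section PowerBounds

variable {m : ℝ → ℝ} {α β γ δ : ℝ}

theorem eventually_le_rpow_nhdsGT_zero (hm : ∀ t, 0 < t → 0 < m t)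
    (h : Tendsto (fun t => Real.log (m t) / Real.log t) (𝓝[>] 0) (𝓝 α)) (hγ : γ < α) :
    ∀ᶠ t in 𝓝[>] 0, m t ≤ t ^ γ := by
  filter_upwards [h.eventually (lt_mem_nhds hγ), Ioo_mem_nhdsGT one_pos] with t hlt ht
  rw [lt_div_iff_of_neg (Real.log_neg ht.1 ht.2)] at hlt
  rw [← Real.log_le_log_iff (hm t ht.1) (Real.rpow_pos_of_pos ht.1 γ), Real.log_rpow ht.1]
  linarith

theorem eventually_le_rpow_atTop (hm : ∀ t, 0 < t → 0 < m t)
    (h : Tendsto (fun t => Real.log (m t) / Real.log t) atTop (𝓝 β)) (hδ : β < δ) :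
    ∀ᶠ t in atTop, m t ≤ t ^ δ := by
  filter_upwards [h.eventually (gt_mem_nhds hδ), eventually_gt_atTop 1] with t hlt ht
  have ht0 : 0 < t := by linarith
  rw [div_lt_iff₀ (Real.log_pos ht)] at hlt
  rw [← Real.log_le_log_iff (hm t ht0) (by positivity), Real.log_rpow ht0]
  linarith

theorem exists_le_mul_max_rpow (hmono : MonotoneOn m (Ioi 0)) (hγ : 0 < γ)
    (hzero : ∀ᶠ t in 𝓝[>] 0, m t ≤ t ^ γ) (htop : ∀ᶠ t in atTop, m t ≤ t ^ δ) :
    ∃ A, 0 < A ∧ ∀ t, 0 < t → m t ≤ A * max (t ^ γ) (t ^ δ) := by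
  obtain ⟨τ, hτ : 0 < τ, hτm⟩ := mem_nhdsGT_iff_exists_Ioc_subset.1 hzero
  obtain ⟨T₀, hT₀⟩ := eventually_atTop.1 htop
  set T := max T₀ τ
  have hT : 0 < T := hτ.trans_le (le_max_right _ _)
  refine ⟨max 1 (T ^ δ / τ ^ γ), lt_max_of_lt_left one_pos, fun t ht => ?_⟩
  have hmax : 0 ≤ max (t ^ γ) (t ^ δ) := by positivity
  have hA₁ : max (t ^ γ) (t ^ δ) ≤ max 1 (T ^ δ / τ ^ γ) * max (t ^ γ) (t ^ δ) :=
    le_mul_of_one_le_left hmax (le_max_left _ _)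
  rcases le_or_gt t τ with htτ | hτt
  · exact (hτm ⟨ht, htτ⟩).trans ((le_max_left _ _).trans hA₁)
  rcases le_or_gt T t with hTt | htT
  · exact (hT₀ t ((le_max_left _ _).trans hTt)).trans ((le_max_right _ _).trans hA₁)
  calc m t ≤ m T := hmono ht hT htT.le
    _ ≤ T ^ δ := hT₀ T (le_max_left _ _)
    _ = T ^ δ / τ ^ γ * τ ^ γ := by field_simp
    _ ≤ max 1 (T ^ δ / τ ^ γ) * max (t ^ γ) (t ^ δ) := by
        gcongr
        · exact le_max_right _ _
        · exact (Real.rpow_le_rpow hτ.le hτt.le hγ.le).trans (le_max_left _ _)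

end PowerBounds

def HasPosFiniteIndices (φ : ℝ → ℝ) : Prop :=
  (∀ t : ℝ, 0 < t → BddAbove ((fun x => φ (t * x) / φ x) '' Ioi 0)) ∧
    ∃ α β : ℝ, 0 < α ∧ α ≤ β ∧
      Tendsto (fun t : ℝ => Real.log (Mfun φ t) / Real.log t) (𝓝[>] 0) (𝓝 α) ∧
      Tendsto (fun t : ℝ => Real.log (Mfun φ t) / Real.log t) atTop (𝓝 β)

def SatisfiesPhi (φ : ℝ → ℝ) : Prop :=
  ∃ ψ₁ ψ₂ : ℝ → ℝ, IncHomeoOnIci ψ₁ ∧ IncHomeoOnIci ψ₂ ∧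
    ∀ t : ℝ, 0 < t → ∀ x : ℝ, 0 < x → ψ₁ t * φ x ≤ φ (t * x) ∧ φ (t * x) ≤ ψ₂ t * φ x

def SatisfiesPhi' (φ : ℝ → ℝ) : Prop :=
  ∃ ψ₁ ψ₂ : ℝ → ℝ, IncHomeoOnIci ψ₁ ∧ (∀ t : ℝ, 0 ≤ t → 0 ≤ ψ₂ t) ∧
    ∀ t : ℝ, 0 < t → ∀ x : ℝ, 0 < x → ψ₁ t * φ x ≤ φ (t * x) ∧ φ (t * x) ≤ ψ₂ t * φ x

theorem SatisfiesPhi.satisfiesPhi' {φ : ℝ → ℝ} (h : SatisfiesPhi φ) : SatisfiesPhi' φ :=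
  let ⟨ψ₁, ψ₂, hψ₁, hψ₂, hψ⟩ := h
  ⟨ψ₁, ψ₂, hψ₁, fun _ ht => hψ₂.2.2.2.1 ht, hψ⟩

theorem SatisfiesPhi'.hasPosFiniteIndices {φ : ℝ → ℝ} (hpos : ∀ x, 0 < x → 0 < φ x)
    (hmono : MonotoneOn φ (Ioi 0)) (h : SatisfiesPhi' φ) : HasPosFiniteIndices φ := by
  obtain ⟨ψ₁, ψ₂, hψ₁, -, hψ⟩ := h
  have hbdd : ∀ t, 0 < t → BddAbove ((fun x => φ (t * x) / φ x) '' Ioi 0) := fun t ht =>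
    ⟨ψ₂ t, mem_upperBounds_of_le_mul hpos fun x hx => (hψ t ht x hx).2⟩
  obtain ⟨s, hψs, hs⟩ :=
    ((hψ₁.tendsto_atTop.eventually_gt_atTop 1).and (eventually_gt_atTop 1)).exists
  have hs₀ : 0 < s := one_pos.trans hs
  have hsmall : Mfun φ s⁻¹ < 1 :=
    (Mfun_inv_le_inv hpos (one_pos.trans hψs) hs₀ fun x hx => (hψ s hs₀ x hx).1).trans_lt
      (inv_lt_one_of_one_lt₀ hψs)
  obtain ⟨α, β, hα, hαβ, hbot, htop⟩ :=
    (monotone_log_Mfun_exp hpos hmono hbdd).exists_tendsto_div_of_subadditive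
      (log_Mfun_exp_add_le hpos hbdd) (Real.log_pos hs) (by
        rw [Real.exp_neg, Real.exp_log hs₀]
        exact Real.log_neg (Mfun_pos hpos (hbdd _ (inv_pos.2 hs₀)) (inv_pos.2 hs₀)) hsmall)
  refine ⟨hbdd, α, β, hα, hαβ, ?_, ?_⟩
  · refine (hbot.comp Real.tendsto_log_nhdsGT_zero).congr' ?_
    filter_upwards [self_mem_nhdsWithin] with t ht
    simp [Real.exp_log (mem_Ioi.1 ht)]
  · refine (htop.comp Real.tendsto_log_atTop).congr' ?_
    filter_upwards [eventually_gt_atTop 0] with t ht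
    simp [Real.exp_log ht]

theorem HasPosFiniteIndices.satisfiesPhi {φ : ℝ → ℝ} (hpos : ∀ x, 0 < x → 0 < φ x)
    (hmono : MonotoneOn φ (Ioi 0)) (h : HasPosFiniteIndices φ) : SatisfiesPhi φ := by
  obtain ⟨hbdd, α, β, hα, hαβ, hα_lim, hβ_lim⟩ := h
  have hM : ∀ t, 0 < t → 0 < Mfun φ t := fun t ht => Mfun_pos hpos (hbdd t ht) ht
  have hγ : 0 < α / 2 := half_pos hα
  have hδ : 0 < β + 1 := by linarith
  obtain ⟨A, hA, hMA⟩ := exists_le_mul_max_rpow (monotoneOn_Mfun hpos hmono hbdd) hγ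
    (eventually_le_rpow_nhdsGT_zero hM hα_lim (half_lt_self hα))
    (eventually_le_rpow_atTop hM hβ_lim (lt_add_one β))
  refine ⟨fun t => A⁻¹ * min (t ^ (α / 2)) (t ^ (β + 1)),
    fun t => A * max (t ^ (α / 2)) (t ^ (β + 1)),
    ((IncHomeoOnIci.rpow hγ).min (.rpow hδ)).const_mul (inv_pos.2 hA),
    ((IncHomeoOnIci.rpow hγ).max (.rpow hδ)).const_mul hA, fun t ht x hx => ⟨?_, ?_⟩⟩
  · set μ := min (t ^ (α / 2)) (t ^ (β + 1))
    have hμ : 0 < μ := lt_min (Real.rpow_pos_of_pos ht _) (Real.rpow_pos_of_pos ht _)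
    have hM_inv : Mfun φ t⁻¹ ≤ A * μ⁻¹ := by
      have := hMA _ (inv_pos.2 ht)
      rwa [Real.inv_rpow ht.le, Real.inv_rpow ht.le,
        max_inv_eq_inv_min (Real.rpow_pos_of_pos ht _) (Real.rpow_pos_of_pos ht _)] at this
    have hx_le : φ x ≤ A * μ⁻¹ * φ (t * x) :=
      (le_Mfun_inv_mul hpos (hbdd _ (inv_pos.2 ht)) ht hx).trans <|
        mul_le_mul_of_nonneg_right hM_inv (hpos _ (mul_pos ht hx)).le
    calc A⁻¹ * μ * φ x ≤ A⁻¹ * μ * (A * μ⁻¹ * φ (t * x)) := by gcongr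
      _ = φ (t * x) := by field_simp
  · exact (le_Mfun_mul hpos (hbdd t ht) hx).trans
      (mul_le_mul_of_nonneg_right (hMA t ht) (hpos x hx).le)

theorem indices_Phi_Phi'_equivalent
    (φ : ℝ → ℝ) (hφ : IncHomeoOnIci φ) :
    -- (i)
    (((∀ t : ℝ, 0 < t → BddAbove ((fun x => φ (t * x) / φ x) '' Ioi 0)) ∧
      ∃ α β : ℝ, 0 < α ∧ α ≤ β ∧
        Tendsto (fun t : ℝ => Real.log (Mfun φ t) / Real.log t)
          (nhdsWithin 0 (Ioi 0)) (nhds α) ∧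
        Tendsto (fun t : ℝ => Real.log (Mfun φ t) / Real.log t) atTop (nhds β))
    ↔
    -- (ii) : condition (Φ)
    (∃ ψ₁ ψ₂ : ℝ → ℝ, IncHomeoOnIci ψ₁ ∧ IncHomeoOnIci ψ₂ ∧
      ∀ t : ℝ, 0 < t → ∀ x : ℝ, 0 < x →
        ψ₁ t * φ x ≤ φ (t * x) ∧ φ (t * x) ≤ ψ₂ t * φ x))
    ∧
    -- (ii) ↔ (iii) : condition (Φ′)
    ((∃ ψ₁ ψ₂ : ℝ → ℝ, IncHomeoOnIci ψ₁ ∧ IncHomeoOnIci ψ₂ ∧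
      ∀ t : ℝ, 0 < t → ∀ x : ℝ, 0 < x →
        ψ₁ t * φ x ≤ φ (t * x) ∧ φ (t * x) ≤ ψ₂ t * φ x)
    ↔
    (∃ ψ₁ ψ₂ : ℝ → ℝ, IncHomeoOnIci ψ₁ ∧ (∀ t : ℝ, 0 ≤ t → 0 ≤ ψ₂ t) ∧
      ∀ t : ℝ, 0 < t → ∀ x : ℝ, 0 < x →
        ψ₁ t * φ x ≤ φ (t * x) ∧ φ (t * x) ≤ ψ₂ t * φ x)) := by
  have hpos : ∀ x, 0 < x → 0 < φ x := fun _ => hφ.pos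
  have h12 : HasPosFiniteIndices φ → SatisfiesPhi φ :=
    HasPosFiniteIndices.satisfiesPhi hpos hφ.monotoneOn
  have h31 : SatisfiesPhi' φ → HasPosFiniteIndices φ :=
    SatisfiesPhi'.hasPosFiniteIndices hpos hφ.monotoneOn
  have h23 : SatisfiesPhi φ → SatisfiesPhi' φ := SatisfiesPhi.satisfiesPhi'
  exact ⟨⟨h12, h31 ∘ h23⟩, ⟨h23, h12 ∘ h31⟩⟩
end

section
/- Let φ : [0,∞) → [0,∞) be an unbounded, increasing, continuous function with φ(0) = 0 and φ(x) > 0 for x > 0. Suppose the limit α := lim_{t→0⁺} ln M(t,φ)/ln t exists in ℝ and let q > 0 with q < α. Then lim_{t→0⁺} t^q/φ(t) = ∞ and lim_{t→∞} t^q/φ(t) = 0. -/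
/- Since `ln M(t,φ) / ln t → α > p > q` and `ln t < 0` near `0⁺`, we get `M(t,φ) < t ^ p` for
small `t`. The bound `φ(t x) ≤ M(t,φ) φ(x)` with `x = 1` gives `φ(t) ≤ φ(1) t ^ p` near `0⁺`, and
with `t ↦ 1/t`, `x = t` it gives `φ(1) t ^ p ≤ φ(t)` near `∞`. Hence `t ^ q / φ t` is bounded
below by `t ^ (q - p) / φ 1 → ∞` at `0⁺`, and above by the same function, which tends to `0`,
at `∞`. -/

open Set Filter

open Topology

section Matuszewska

variable {φ : ℝ → ℝ} {t x p α : ℝ}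

lemma div_le_Mfun (hφ : MonotoneOn φ (Ici 0)) (hpos : ∀ x : ℝ, 0 < x → 0 < φ x)
    (ht0 : 0 < t) (ht1 : t ≤ 1) (hx : 0 < x) :
    φ (t * x) / φ x ≤ Mfun φ t := by
  refine le_csSup ⟨1, ?_⟩ ⟨x, hx, rfl⟩
  rintro _ ⟨z, hz, rfl⟩
  have hz : (0 : ℝ) < z := hz
  exact div_le_one_of_le₀ (hφ (mul_pos ht0 hz).le hz.le (mul_le_of_le_one_left hz.le ht1))
    (hpos z hz).le

lemma map_mul_le_Mfun_mul (hφ : MonotoneOn φ (Ici 0)) (hpos : ∀ x : ℝ, 0 < x → 0 < φ x)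
    (ht0 : 0 < t) (ht1 : t ≤ 1) (hx : 0 < x) :
    φ (t * x) ≤ Mfun φ t * φ x :=
  (div_le_iff₀ (hpos x hx)).mp (div_le_Mfun hφ hpos ht0 ht1 hx)

lemma Mfun_pos_s17 (hφ : MonotoneOn φ (Ici 0)) (hpos : ∀ x : ℝ, 0 < x → 0 < φ x)
    (ht0 : 0 < t) (ht1 : t ≤ 1) : 0 < Mfun φ t := by
  have h := div_le_Mfun hφ hpos ht0 ht1 one_pos
  rw [mul_one] at h
  exact (div_pos (hpos t ht0) (hpos 1 one_pos)).trans_le h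

lemma eventually_Mfun_lt_rpow (hφ : MonotoneOn φ (Ici 0)) (hpos : ∀ x : ℝ, 0 < x → 0 < φ x)
    (hα : Tendsto (fun t : ℝ => Real.log (Mfun φ t) / Real.log t) (𝓝[>] 0) (𝓝 α))
    (hp : p < α) :
    ∀ᶠ t in 𝓝[>] 0, Mfun φ t < t ^ p := by
  filter_upwards [hα.eventually (eventually_gt_nhds hp),
    Ioo_mem_nhdsGT_of_mem ⟨le_rfl, one_pos⟩] with t hlt ⟨ht0, ht1⟩
  have hlog : Real.log (Mfun φ t) < Real.log t * p := by
    rw [mul_comm]; exact (lt_div_iff_of_neg (Real.log_neg ht0 ht1)).mp hlt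
  calc Mfun φ t = Real.exp (Real.log (Mfun φ t)) :=
        (Real.exp_log (Mfun_pos_s17 hφ hpos ht0 ht1.le)).symm
    _ < Real.exp (Real.log t * p) := Real.exp_lt_exp.mpr hlog
    _ = t ^ p := (Real.rpow_def_of_pos ht0 p).symm

lemma eventually_le_mul_rpow_nhdsGT_zero (hφ : MonotoneOn φ (Ici 0))
    (hpos : ∀ x : ℝ, 0 < x → 0 < φ x) (hM : ∀ᶠ t in 𝓝[>] 0, Mfun φ t < t ^ p) :
    ∀ᶠ t in 𝓝[>] 0, φ t ≤ φ 1 * t ^ p := by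
  filter_upwards [hM, Ioo_mem_nhdsGT_of_mem ⟨le_rfl, one_pos⟩] with t hMt ⟨ht0, ht1⟩
  calc φ t = φ (t * 1) := by rw [mul_one]
    _ ≤ Mfun φ t * φ 1 := map_mul_le_Mfun_mul hφ hpos ht0 ht1.le one_pos
    _ ≤ φ 1 * t ^ p := by rw [mul_comm]; gcongr; exact (hpos 1 one_pos).le

lemma eventually_mul_rpow_le_atTop (hφ : MonotoneOn φ (Ici 0))
    (hpos : ∀ x : ℝ, 0 < x → 0 < φ x) (hM : ∀ᶠ t in 𝓝[>] 0, Mfun φ t < t ^ p) :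
    ∀ᶠ t in atTop, φ 1 * t ^ p ≤ φ t := by
  filter_upwards [tendsto_inv_atTop_nhdsGT_zero.eventually hM, eventually_ge_atTop 1]
    with t hMt ht1
  have ht0 : 0 < t := one_pos.trans_le ht1
  have hφ1 : φ 1 ≤ Mfun φ t⁻¹ * φ t := by
    simpa [inv_mul_cancel₀ ht0.ne'] using
      map_mul_le_Mfun_mul hφ hpos (inv_pos.mpr ht0) (inv_le_one_of_one_le₀ ht1) ht0
  have hinv : t⁻¹ ^ p * t ^ p = 1 := by
    rw [Real.inv_rpow ht0.le, inv_mul_cancel₀ (Real.rpow_pos_of_pos ht0 p).ne']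
  calc φ 1 * t ^ p ≤ Mfun φ t⁻¹ * φ t * t ^ p := by gcongr
    _ ≤ t⁻¹ ^ p * φ t * t ^ p := by gcongr; exact (hpos t ht0).le
    _ = φ t := by rw [mul_right_comm, hinv, one_mul]

end Matuszewska

theorem limits_of_lt_alpha_general
(φ : ℝ → ℝ) (hmono : StrictMonoOn φ (Ici 0))
    (hpos : ∀ x : ℝ, 0 < x → 0 < φ x)
    (α : ℝ)
    (hα : Tendsto (fun t : ℝ => Real.log (Mfun φ t) / Real.log t)
      (nhdsWithin 0 (Ioi 0)) (nhds α))
    (q : ℝ) (hqα : q < α) :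
    Tendsto (fun t : ℝ => t ^ q / φ t) (nhdsWithin 0 (Ioi 0)) atTop ∧
    Tendsto (fun t : ℝ => t ^ q / φ t) atTop (nhds 0) := by
  obtain ⟨p, hqp, hpα⟩ := exists_between hqα
  have hM := eventually_Mfun_lt_rpow hmono.monotoneOn hpos hα hpα
  have hφ1 := hpos 1 one_pos
  constructor
  · refine tendsto_atTop_mono' _ ?_
      ((tendsto_rpow_neg_nhdsGT_zero (sub_neg.mpr hqp)).atTop_div_const hφ1)
    filter_upwards [eventually_le_mul_rpow_nhdsGT_zero hmono.monotoneOn hpos hM,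
      self_mem_nhdsWithin] with t hφt (ht0 : 0 < t)
    rw [Real.rpow_sub ht0, div_div, mul_comm]
    gcongr
    exact hpos t ht0
  · refine squeeze_zero' ?_ ?_
      (by simpa using (tendsto_rpow_neg_atTop (sub_pos.mpr hqp)).div_const (φ 1))
    · filter_upwards [eventually_gt_atTop 0] with t ht0
      exact div_nonneg (Real.rpow_nonneg ht0.le q) (hpos t ht0).le
    · filter_upwards [eventually_mul_rpow_le_atTop hmono.monotoneOn hpos hM,
        eventually_gt_atTop 0] with t hφt ht0
      rw [Real.rpow_sub ht0, div_div, mul_comm (t ^ p)]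
      gcongr

theorem limits_of_lt_alpha
(φ : ℝ → ℝ) (hmono : StrictMonoOn φ (Ici 0)) (hcont : ContinuousOn φ (Ici 0))
    (hzero : φ 0 = 0) (hpos : ∀ x : ℝ, 0 < x → 0 < φ x)
    (hunbdd : ¬ BddAbove (φ '' Ici 0))
    (α : ℝ)
    (hα : Tendsto (fun t : ℝ => Real.log (Mfun φ t) / Real.log t)
      (nhdsWithin 0 (Ioi 0)) (nhds α))
    (q : ℝ) (hq : 0 < q) (hqα : q < α) :
    Tendsto (fun t : ℝ => t ^ q / φ t) (nhdsWithin 0 (Ioi 0)) atTop ∧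
    Tendsto (fun t : ℝ => t ^ q / φ t) atTop (nhds 0) :=
  limits_of_lt_alpha_general φ hmono hpos α hα q hqα
end
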